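/- arXiv:1402.0250 — 8 statements merged into one kernel-verified Lean document; each statement's English description precedes it below -/
import Mathlib

section
/- A cartesian cell in a double category has a vertical inverse if and only if its vertical source and target are invertible vertical morphisms. The same holds for opcartesian cells. -/
universe u v w x

/-- A (strict) double category: objects, vertical morphisms, horizontal morphisms
and square-shaped cells, with strictly associative vertical composition of cells and
(strictified) horizontal composition. -/
structure DoubleCat where
  Obj : Type u
  Ver : Obj → Obj → Type v
  vid : ∀ A, Ver A A
  vcomp : ∀ {A B C}, Ver A B → Ver B C → Ver A C
  vid_vcomp : ∀ {A B} (f : Ver A B), vcomp (vid A) f = f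
  vcomp_vid : ∀ {A B} (f : Ver A B), vcomp f (vid B) = f
  vassoc : ∀ {A B C D} (f : Ver A B) (g : Ver B C) (h : Ver C D),
    vcomp (vcomp f g) h = vcomp f (vcomp g h)
  Hor : Obj → Obj → Type w
  hid : ∀ A, Hor A A
  hcomp : ∀ {A B C}, Hor A B → Hor B C → Hor A C
  hid_hcomp : ∀ {A B} (J : Hor A B), hcomp (hid A) J = J
  hcomp_hid : ∀ {A B} (J : Hor A B), hcomp J (hid B) = J
  hassoc : ∀ {A B C D} (J : Hor A B) (H : Hor B C) (K : Hor C D),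
    hcomp (hcomp J H) K = hcomp J (hcomp H K)
  Cell : ∀ {A B C D}, Hor A B → Ver A C → Ver B D → Hor C D → Type x
  cid : ∀ {A B} (J : Hor A B), Cell J (vid A) (vid B) J
  cidV : ∀ {A C} (f : Ver A C), Cell (hid A) f f (hid C)
  vcompCell : ∀ {A B C D E F : Obj} {J : Hor A B} {K : Hor C D} {L : Hor E F}
    {f : Ver A C} {g : Ver B D} {h : Ver C E} {k : Ver D F},
    Cell J f g K → Cell K h k L → Cell J (vcomp f h) (vcomp g k) L
  hcompCell : ∀ {A B C A' B' C' : Obj} {J : Hor A B} {H : Hor B C}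
    {K : Hor A' B'} {L : Hor B' C'} {f : Ver A A'} {g : Ver B B'} {h : Ver C C'},
    Cell J f g K → Cell H g h L → Cell (hcomp J H) f h (hcomp K L)
  cid_vcompCell : ∀ {A B C D} {J : Hor A B} {K : Hor C D} {f : Ver A C} {g : Ver B D}
    (α : Cell J f g K), HEq (vcompCell (cid J) α) α
  vcompCell_cid : ∀ {A B C D} {J : Hor A B} {K : Hor C D} {f : Ver A C} {g : Ver B D}
    (α : Cell J f g K), HEq (vcompCell α (cid K)) α
  vcompCell_assoc : ∀ {A B C D E F G H' : Obj} {J : Hor A B} {K : Hor C D} {L : Hor E F}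
    {N : Hor G H'} {f1 : Ver A C} {g1 : Ver B D} {f2 : Ver C E} {g2 : Ver D F}
    {f3 : Ver E G} {g3 : Ver F H'}
    (α : Cell J f1 g1 K) (β : Cell K f2 g2 L) (γ : Cell L f3 g3 N),
    HEq (vcompCell (vcompCell α β) γ) (vcompCell α (vcompCell β γ))
  interchange : ∀ {A B C A' B' C' A'' B'' C'' : Obj}
    {J : Hor A B} {H : Hor B C} {K : Hor A' B'} {L : Hor B' C'}
    {K' : Hor A'' B''} {L' : Hor B'' C''}
    {f : Ver A A'} {g : Ver B B'} {h : Ver C C'}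
    {f' : Ver A' A''} {g' : Ver B' B''} {h' : Ver C' C''}
    (φ : Cell J f g K) (χ : Cell H g h L) (ψ : Cell K f' g' K') (ξ : Cell L g' h' L'),
    vcompCell (hcompCell φ χ) (hcompCell ψ ξ) = hcompCell (vcompCell φ ψ) (vcompCell χ ξ)
  cid_hcomp : ∀ {A B C} (J : Hor A B) (H : Hor B C),
    cid (hcomp J H) = hcompCell (cid J) (cid H)
  cidV_vid : ∀ A, cidV (vid A) = cid (hid A)
  cidV_vcomp : ∀ {A B C} (f : Ver A B) (g : Ver B C),
    cidV (vcomp f g) = vcompCell (cidV f) (cidV g)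
  hcompCell_assoc : ∀ {A B C D A' B' C' D' : Obj}
    {J : Hor A B} {H : Hor B C} {G : Hor C D}
    {J' : Hor A' B'} {H' : Hor B' C'} {G' : Hor C' D'}
    {f : Ver A A'} {g : Ver B B'} {h : Ver C C'} {k : Ver D D'}
    (α : Cell J f g J') (β : Cell H g h H') (γ : Cell G h k G'),
    HEq (hcompCell (hcompCell α β) γ) (hcompCell α (hcompCell β γ))
  cidV_hcompCell : ∀ {A B A' B'} {J : Hor A B} {J' : Hor A' B'}
    {f : Ver A A'} {g : Ver B B'} (α : Cell J f g J'),
    HEq (hcompCell (cidV f) α) α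
  hcompCell_cidV : ∀ {A B A' B'} {J : Hor A B} {J' : Hor A' B'}
    {f : Ver A A'} {g : Ver B B'} (α : Cell J f g J'),
    HEq (hcompCell α (cidV g)) α

namespace DoubleCat

variable (D : DoubleCat)

/-- A cell is cartesian if every cell with the same horizontal target and vertical
sides factoring through its vertical sides factors uniquely through it. -/
def IsCartesian {A B C E : D.Obj} {J : D.Hor A B} {K : D.Hor C E}
    {f : D.Ver A C} {g : D.Ver B E} (φ : D.Cell J f g K) : Prop :=
  ∀ {X Y : D.Obj} (H : D.Hor X Y) (h : D.Ver X A) (k : D.Ver Y B)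
    (ψ : D.Cell H (D.vcomp h f) (D.vcomp k g) K),
    ∃! ψ' : D.Cell H h k J, ψ = D.vcompCell ψ' φ

/-- A cell is opcartesian if every cell with the same horizontal source and vertical
sides factoring through its vertical sides factors uniquely through it. -/
def IsOpcartesian {A B C E : D.Obj} {J : D.Hor A B} {K : D.Hor C E}
    {f : D.Ver A C} {g : D.Ver B E} (φ : D.Cell J f g K) : Prop :=
  ∀ {X Y : D.Obj} (L : D.Hor X Y) (h : D.Ver C X) (k : D.Ver E Y)
    (χ : D.Cell J (D.vcomp f h) (D.vcomp g k) L),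
    ∃! χ' : D.Cell K h k L, χ = D.vcompCell φ χ'

/-- `(ε, η)` exhibits `fs` as the companion of the vertical morphism `f`. -/
def IsCompanion {A C : D.Obj} (f : D.Ver A C) (fs : D.Hor A C)
    (ε : D.Cell fs f (D.vid C) (D.hid C)) (η : D.Cell (D.hid A) (D.vid A) f fs) : Prop :=
  HEq (D.vcompCell η ε) (D.cidV f) ∧ HEq (D.hcompCell η ε) (D.cid fs)

/-- `(ε, η)` exhibits `gs` as the conjoint of the vertical morphism `g`. -/
def IsConjoint {B E : D.Obj} (g : D.Ver B E) (gs : D.Hor E B)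
    (ε : D.Cell gs (D.vid E) g (D.hid E)) (η : D.Cell (D.hid B) g (D.vid B) gs) : Prop :=
  HEq (D.vcompCell η ε) (D.cidV g) ∧ HEq (D.hcompCell ε η) (D.cid gs)

/-- A vertical morphism is invertible. -/
def VInvertible {A C : D.Obj} (f : D.Ver A C) : Prop :=
  ∃ f' : D.Ver C A, D.vcomp f f' = D.vid A ∧ D.vcomp f' f = D.vid C

/-- A cell has a vertical inverse. -/
def HasVerticalInverse {A B C E : D.Obj} {J : D.Hor A B} {K : D.Hor C E}
    {f : D.Ver A C} {g : D.Ver B E} (φ : D.Cell J f g K) : Prop :=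
  ∃ (f' : D.Ver C A) (g' : D.Ver E B) (ψ : D.Cell K f' g' J),
    D.vcomp f f' = D.vid A ∧ D.vcomp f' f = D.vid C ∧
    D.vcomp g g' = D.vid B ∧ D.vcomp g' g = D.vid E ∧
    HEq (D.vcompCell φ ψ) (D.cid J) ∧ HEq (D.vcompCell ψ φ) (D.cid K)

/-- `ε : J ⇒ 1_M` defines `r` as the right Kan extension of `d` along `J`. -/
def IsRan {A B M : D.Obj} {J : D.Hor A B} {r : D.Ver A M} {d : D.Ver B M}
    (ε : D.Cell J r d (D.hid M)) : Prop :=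
  ∀ (s : D.Ver A M) (φ : D.Cell J s d (D.hid M)),
    ∃! φ' : D.Cell (D.hid A) s r (D.hid M), HEq φ (D.hcompCell φ' ε)

/-- `ε : J ⇒ 1_M` defines `r` as the pointwise right Kan extension of `d` along `J`. -/
def IsPointwiseRan {A B M : D.Obj} {J : D.Hor A B} {r : D.Ver A M} {d : D.Ver B M}
    (ε : D.Cell J r d (D.hid M)) : Prop :=
  ∀ {C : D.Obj} (H : D.Hor C A) (s : D.Ver C M) (φ : D.Cell (D.hcomp H J) s d (D.hid M)),
    ∃! φ' : D.Cell H s r (D.hid M), HEq φ (D.hcompCell φ' ε)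

/-- The vertical cell `ε : r ∘ j ⇒ d` defines `r` as the right Kan extension of `d`
along `j` in the vertical 2-category `V(K)`. -/
def IsRan2 {A B M : D.Obj} (j : D.Ver A B) (r : D.Ver B M) (d : D.Ver A M)
    (ε : D.Cell (D.hid A) (D.vcomp j r) d (D.hid M)) : Prop :=
  ∀ (s : D.Ver B M) (ψ : D.Cell (D.hid A) (D.vcomp j s) d (D.hid M)),
    ∃! ψ' : D.Cell (D.hid B) s r (D.hid M),
      HEq ψ (D.hcompCell (D.vcompCell (D.cidV j) ψ') ε)

/-- `π : 1_T ⇒ J` is a tabulation of `J`: it satisfies the 1- and 2-dimensional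
universal properties. -/
def IsTabulation {T A B : D.Obj} {pA : D.Ver T A} {pB : D.Ver T B} {J : D.Hor A B}
    (π : D.Cell (D.hid T) pA pB J) : Prop :=
  (∀ {X : D.Obj} (φA : D.Ver X A) (φB : D.Ver X B) (φ : D.Cell (D.hid X) φA φB J),
    ∃! φ' : D.Ver X T, D.vcomp φ' pA = φA ∧ D.vcomp φ' pB = φB ∧
      HEq (D.vcompCell (D.cidV φ') π) φ) ∧
  (∀ {X Y : D.Obj} (H : D.Hor X Y)
    (φA : D.Ver X A) (φB : D.Ver X B) (φ : D.Cell (D.hid X) φA φB J)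
    (ψA : D.Ver Y A) (ψB : D.Ver Y B) (ψ : D.Cell (D.hid Y) ψA ψB J)
    (φ' : D.Ver X T) (ψ' : D.Ver Y T),
    (D.vcomp φ' pA = φA ∧ D.vcomp φ' pB = φB ∧ HEq (D.vcompCell (D.cidV φ') π) φ) →
    (D.vcomp ψ' pA = ψA ∧ D.vcomp ψ' pB = ψB ∧ HEq (D.vcompCell (D.cidV ψ') π) ψ) →
    ∀ (ξA : D.Cell H φA ψA (D.hid A)) (ξB : D.Cell H φB ψB (D.hid B)),
      HEq (D.hcompCell ξA ψ) (D.hcompCell φ ξB) →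
      ∃! ξ' : D.Cell H φ' ψ' (D.hid T),
        HEq (D.vcompCell ξ' (D.cidV pA)) ξA ∧ HEq (D.vcompCell ξ' (D.cidV pB)) ξB)

end DoubleCat


namespace DoubleCat

variable (Dc : DoubleCat)

def castCell {A B C E : Dc.Obj} {J : Dc.Hor A B} {K : Dc.Hor C E}
    {f f' : Dc.Ver A C} {g g' : Dc.Ver B E} (hf : f = f') (hg : g = g')
    (α : Dc.Cell J f g K) : Dc.Cell J f' g' K := hf ▸ hg ▸ α

theorem castCell_heq {A B C E : Dc.Obj} {J : Dc.Hor A B} {K : Dc.Hor C E}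
    {f f' : Dc.Ver A C} {g g' : Dc.Ver B E} (hf : f = f') (hg : g = g')
    (α : Dc.Cell J f g K) : HEq (Dc.castCell hf hg α) α := by
  subst hf; subst hg; rfl

theorem vcompCell_congr {A B C D E F : Dc.Obj} {J : Dc.Hor A B} {K : Dc.Hor C D}
    {L : Dc.Hor E F}
    {f f' : Dc.Ver A C} {g g' : Dc.Ver B D} {h h' : Dc.Ver C E} {k k' : Dc.Ver D F}
    (hf : f = f') (hg : g = g') (hh : h = h') (hk : k = k')
    {α : Dc.Cell J f g K} {α' : Dc.Cell J f' g' K}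
    {β : Dc.Cell K h k L} {β' : Dc.Cell K h' k' L}
    (hα : HEq α α') (hβ : HEq β β') :
    HEq (Dc.vcompCell α β) (Dc.vcompCell α' β') := by
  subst hf; subst hg; subst hh; subst hk
  rw [eq_of_heq hα, eq_of_heq hβ]

end DoubleCat

/-- A cartesian (resp. opcartesian) cell has a vertical inverse if and only if its
vertical source and target are invertible. -/
theorem stmt2 (D : DoubleCat) {A B C E : D.Obj} {J : D.Hor A B} {K : D.Hor C E}
    {f : D.Ver A C} {g : D.Ver B E} (φ : D.Cell J f g K) :
    (D.IsCartesian φ → (D.HasVerticalInverse φ ↔ D.VInvertible f ∧ D.VInvertible g)) ∧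
    (D.IsOpcartesian φ → (D.HasVerticalInverse φ ↔ D.VInvertible f ∧ D.VInvertible g)) := by
  have fwd : D.HasVerticalInverse φ → D.VInvertible f ∧ D.VInvertible g := by
    rintro ⟨f', g', ψ, h1, h2, h3, h4, _, _⟩
    exact ⟨⟨f', h1, h2⟩, ⟨g', h3, h4⟩⟩
  constructor
  · intro hcart
    refine ⟨fwd, ?_⟩
    rintro ⟨⟨f', hf1, hf2⟩, ⟨g', hg1, hg2⟩⟩
    obtain ⟨ψ, hψ, huniq⟩ := hcart K f' g'
      (D.castCell hf2.symm hg2.symm (D.cid K))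
    have hψφ : HEq (D.vcompCell ψ φ) (D.cid K) := by
      rw [← hψ]; exact D.castCell_heq _ _ _
    obtain ⟨χ, hχ, huniq'⟩ := hcart J (D.vid A) (D.vid B)
      (D.castCell (D.vid_vcomp f).symm (D.vid_vcomp g).symm φ)
    have key : HEq φ (D.vcompCell (D.vcompCell φ ψ) φ) := by
      refine HEq.symm ?_
      refine HEq.trans (D.vcompCell_assoc φ ψ φ) ?_
      refine HEq.trans (D.vcompCell_congr rfl rfl hf2 hg2 (HEq.refl φ) hψφ) ?_
      exact D.vcompCell_cid φ
    have e1 : D.castCell hf1 hg1 (D.vcompCell φ ψ) = χ := by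
      apply huniq'
      apply eq_of_heq
      refine HEq.trans (D.castCell_heq _ _ _) ?_
      refine HEq.trans key ?_
      exact D.vcompCell_congr hf1 hg1 rfl rfl
        (HEq.symm (D.castCell_heq hf1 hg1 _)) (HEq.refl φ)
    have e2 : D.cid J = χ := by
      apply huniq'
      apply eq_of_heq
      exact HEq.trans (D.castCell_heq _ _ _) (HEq.symm (D.cid_vcompCell φ))
    have hfin : HEq (D.vcompCell φ ψ) (D.cid J) := by
      refine HEq.trans (HEq.symm (D.castCell_heq hf1 hg1 _)) ?_
      rw [e1, ← e2]
    exact ⟨f', g', ψ, hf1, hf2, hg1, hg2, hfin, hψφ⟩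
  · intro hopc
    refine ⟨fwd, ?_⟩
    rintro ⟨⟨f', hf1, hf2⟩, ⟨g', hg1, hg2⟩⟩
    obtain ⟨ψ, hψ, huniq⟩ := hopc J f' g'
      (D.castCell hf1.symm hg1.symm (D.cid J))
    have hφψ : HEq (D.vcompCell φ ψ) (D.cid J) := by
      rw [← hψ]; exact D.castCell_heq _ _ _
    obtain ⟨χ, hχ, huniq'⟩ := hopc K (D.vid C) (D.vid E)
      (D.castCell (D.vcomp_vid f).symm (D.vcomp_vid g).symm φ)
    have key : HEq φ (D.vcompCell φ (D.vcompCell ψ φ)) := by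
      refine HEq.symm ?_
      refine HEq.trans (HEq.symm (D.vcompCell_assoc φ ψ φ)) ?_
      refine HEq.trans (D.vcompCell_congr hf1 hg1 rfl rfl hφψ (HEq.refl φ)) ?_
      exact D.cid_vcompCell φ
    have e1 : D.castCell hf2 hg2 (D.vcompCell ψ φ) = χ := by
      apply huniq'
      apply eq_of_heq
      refine HEq.trans (D.castCell_heq _ _ _) ?_
      refine HEq.trans key ?_
      exact D.vcompCell_congr rfl rfl hf2 hg2
        (HEq.refl φ) (HEq.symm (D.castCell_heq hf2 hg2 _))
    have e2 : D.cid K = χ := by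
      apply huniq'
      apply eq_of_heq
      exact HEq.trans (D.castCell_heq _ _ _) (HEq.symm (D.vcompCell_cid φ))
    have hfin : HEq (D.vcompCell ψ φ) (D.cid K) := by
      refine HEq.trans (HEq.symm (D.castCell_heq hf2 hg2 _)) ?_
      rw [e1, ← e2]
    exact ⟨f', g', ψ, hf1, hf2, hg1, hg2, hφψ, hfin⟩
end

section
/- Let f : A → C be a vertical morphism in a double category and consider a cell φ with horizontal source J : A ⇸ C, vertical source f, identity vertical target, and horizontal target the unit 1_C. Then φ is cartesian if and only if there exists a cell ψ (with horizontal source 1_A, vertical target f, horizontal target J) such that the pair (φ, ψ) defines J as the companion of f, i.e. φ ∘ ψ = 1_f and ψ ⊙ φ = id_J (horizontal composite, modulo unitors). -/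
universe u v w x

namespace Stmt3Aux

variable (D : DoubleCat)

/-- Transport a cell along equalities of its boundary data. -/
def transport {A B C E : D.Obj} {J J' : D.Hor A B}
    {f f' : D.Ver A C} {g g' : D.Ver B E} {K K' : D.Hor C E}
    (hJ : J = J') (hf : f = f') (hg : g = g') (hK : K = K')
    (α : D.Cell J f g K) : D.Cell J' f' g' K' := by
  subst hJ hf hg hK; exact α

theorem transport_heq {A B C E : D.Obj} {J J' : D.Hor A B}
    {f f' : D.Ver A C} {g g' : D.Ver B E} {K K' : D.Hor C E}
    (hJ : J = J') (hf : f = f') (hg : g = g') (hK : K = K')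
    (α : D.Cell J f g K) : HEq (transport D hJ hf hg hK α) α := by
  subst hJ hf hg hK; rfl

theorem vcompCell_hcongr {A B C' E' F' G' : D.Obj}
    {J J' : D.Hor A B} {K K' : D.Hor C' E'} {L L' : D.Hor F' G'}
    {f1 f1' : D.Ver A C'} {g1 g1' : D.Ver B E'} {f2 f2' : D.Ver C' F'} {g2 g2' : D.Ver E' G'}
    (hJ : J = J') (hK : K = K') (hL : L = L') (hf1 : f1 = f1') (hg1 : g1 = g1')
    (hf2 : f2 = f2') (hg2 : g2 = g2')
    {α : D.Cell J f1 g1 K} {α' : D.Cell J' f1' g1' K'}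
    {β : D.Cell K f2 g2 L} {β' : D.Cell K' f2' g2' L'}
    (hα : HEq α α') (hβ : HEq β β') :
    HEq (D.vcompCell α β) (D.vcompCell α' β') := by
  subst hJ hK hL hf1 hg1 hf2 hg2
  rw [eq_of_heq hα, eq_of_heq hβ]

theorem hcompCell_hcongr {A B C' A' B' C'' : D.Obj}
    {J J2 : D.Hor A B} {H H2 : D.Hor B C'} {K K2 : D.Hor A' B'} {L L2 : D.Hor B' C''}
    {f f2 : D.Ver A A'} {g g2 : D.Ver B B'} {h h2 : D.Ver C' C''}
    (hJ : J = J2) (hH : H = H2) (hK : K = K2) (hL : L = L2)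
    (hf : f = f2) (hg : g = g2) (hh : h = h2)
    {α : D.Cell J f g K} {α' : D.Cell J2 f2 g2 K2}
    {β : D.Cell H g h L} {β' : D.Cell H2 g2 h2 L2}
    (hα : HEq α α') (hβ : HEq β β') :
    HEq (D.hcompCell α β) (D.hcompCell α' β') := by
  subst hJ hH hK hL hf hg hh
  rw [eq_of_heq hα, eq_of_heq hβ]

end Stmt3Aux

/-- A cell `φ : J ⇒ 1_C` with vertical source `f` and identity vertical target is
cartesian iff there is a cell `ψ` making `(φ, ψ)` exhibit `J` as the companion of `f`. -/
theorem stmt3 (D : DoubleCat) {A C : D.Obj} (f : D.Ver A C) {J : D.Hor A C}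
    (φ : D.Cell J f (D.vid C) (D.hid C)) :
    D.IsCartesian φ ↔ ∃ ψ : D.Cell (D.hid A) (D.vid A) f J, D.IsCompanion f J φ ψ := by
  open Stmt3Aux in
  constructor
  · intro hcart
    -- obtain ψ from cartesianness applied to the identity cell of f
    obtain ⟨ψ, hψ, -⟩ := hcart (D.hid A) (D.vid A) f
      (transport D rfl (D.vid_vcomp f).symm (D.vcomp_vid f).symm rfl (D.cidV f))
    have comp1 : HEq (D.vcompCell ψ φ) (D.cidV f) :=
      (heq_of_eq hψ.symm).trans
        (transport_heq D rfl (D.vid_vcomp f).symm (D.vcomp_vid f).symm rfl (D.cidV f))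
    refine ⟨ψ, comp1, ?_⟩
    -- second companion identity via uniqueness
    have hχ2 : HEq (transport D rfl (D.vid_vcomp f).symm (D.vid_vcomp (D.vid C)).symm rfl φ) φ :=
      transport_heq D rfl (D.vid_vcomp f).symm (D.vid_vcomp (D.vid C)).symm rfl φ
    obtain ⟨u, -, huniq⟩ := hcart J (D.vid A) (D.vid C)
      (transport D rfl (D.vid_vcomp f).symm (D.vid_vcomp (D.vid C)).symm rfl φ)
    have hcid : transport D rfl (D.vid_vcomp f).symm (D.vid_vcomp (D.vid C)).symm rfl φ
        = D.vcompCell (D.cid J) φ :=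
      eq_of_heq (hχ2.trans (D.cid_vcompCell φ).symm)
    have hu2raw : HEq (transport D (D.hid_hcomp J) rfl rfl (D.hcomp_hid J) (D.hcompCell ψ φ))
        (D.hcompCell ψ φ) :=
      transport_heq D (D.hid_hcomp J) rfl rfl (D.hcomp_hid J) (D.hcompCell ψ φ)
    have hu2 : transport D rfl (D.vid_vcomp f).symm (D.vid_vcomp (D.vid C)).symm rfl φ
        = D.vcompCell (transport D (D.hid_hcomp J) rfl rfl (D.hcomp_hid J) (D.hcompCell ψ φ)) φ := by
      refine eq_of_heq (hχ2.trans (HEq.symm ?_))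
      have s1 : HEq (D.vcompCell (transport D (D.hid_hcomp J) rfl rfl (D.hcomp_hid J)
            (D.hcompCell ψ φ)) φ)
          (D.vcompCell (D.hcompCell ψ φ) (D.hcompCell φ (D.cidV (D.vid C)))) :=
        vcompCell_hcongr D (D.hid_hcomp J).symm (D.hcomp_hid J).symm
          (D.hcomp_hid (D.hid C)).symm rfl rfl rfl rfl
          hu2raw (D.hcompCell_cidV φ).symm
      have s3 : D.vcompCell (D.hcompCell ψ φ) (D.hcompCell φ (D.cidV (D.vid C)))
          = D.hcompCell (D.vcompCell ψ φ) (D.vcompCell φ (D.cidV (D.vid C))) :=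
        D.interchange ψ φ φ (D.cidV (D.vid C))
      have t1 : HEq (D.vcompCell φ (D.cidV (D.vid C))) φ := by
        refine HEq.trans ?_ (D.vcompCell_cid φ)
        exact vcompCell_hcongr D rfl rfl rfl rfl rfl rfl rfl HEq.rfl
          (heq_of_eq (D.cidV_vid C))
      have s4 : HEq (D.hcompCell (D.vcompCell ψ φ) (D.vcompCell φ (D.cidV (D.vid C))))
          (D.hcompCell (D.cidV f) φ) :=
        hcompCell_hcongr D rfl rfl rfl rfl (D.vid_vcomp f)
          (D.vcomp_vid f) (D.vcomp_vid (D.vid C)) comp1 t1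
      exact ((s1.trans (heq_of_eq s3)).trans s4).trans (D.cidV_hcompCell φ)
    have hfin : D.cid J = transport D (D.hid_hcomp J) rfl rfl (D.hcomp_hid J) (D.hcompCell ψ φ) :=
      (huniq _ hcid).trans (huniq _ hu2).symm
    exact hu2raw.symm.trans (heq_of_eq hfin.symm)
  · rintro ⟨ψ, comp1, comp2⟩
    intro X Y H h k χ
    refine ⟨transport D (D.hid_hcomp H) (D.vcomp_vid h) (D.vcomp_vid k) (D.hcomp_hid J)
      (D.hcompCell (D.vcompCell (D.cidV h) ψ) χ), ?_, ?_⟩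
    · -- existence of the factorization
      have hraw : HEq (transport D (D.hid_hcomp H) (D.vcomp_vid h) (D.vcomp_vid k)
          (D.hcomp_hid J) (D.hcompCell (D.vcompCell (D.cidV h) ψ) χ))
          (D.hcompCell (D.vcompCell (D.cidV h) ψ) χ) :=
        transport_heq D _ _ _ _ _
      refine eq_of_heq (HEq.symm ?_)
      have s1 : HEq (D.vcompCell (transport D (D.hid_hcomp H) (D.vcomp_vid h)
            (D.vcomp_vid k) (D.hcomp_hid J) (D.hcompCell (D.vcompCell (D.cidV h) ψ) χ)) φ)
          (D.vcompCell (D.hcompCell (D.vcompCell (D.cidV h) ψ) χ)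
            (D.hcompCell φ (D.cidV (D.vid C)))) :=
        vcompCell_hcongr D (D.hid_hcomp H).symm (D.hcomp_hid J).symm
          (D.hcomp_hid (D.hid C)).symm (D.vcomp_vid h).symm (D.vcomp_vid k).symm rfl rfl
          hraw (D.hcompCell_cidV φ).symm
      have s3 : D.vcompCell (D.hcompCell (D.vcompCell (D.cidV h) ψ) χ)
            (D.hcompCell φ (D.cidV (D.vid C)))
          = D.hcompCell (D.vcompCell (D.vcompCell (D.cidV h) ψ) φ)
            (D.vcompCell χ (D.cidV (D.vid C))) :=
        D.interchange (D.vcompCell (D.cidV h) ψ) χ φ (D.cidV (D.vid C))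
      have t1 : HEq (D.vcompCell (D.vcompCell (D.cidV h) ψ) φ) (D.cidV (D.vcomp h f)) := by
        refine HEq.trans (D.vcompCell_assoc (D.cidV h) ψ φ) ?_
        refine HEq.trans ?_ (heq_of_eq (D.cidV_vcomp h f).symm)
        exact vcompCell_hcongr D rfl rfl rfl rfl rfl (D.vid_vcomp f) (D.vcomp_vid f)
          HEq.rfl comp1
      have t2 : HEq (D.vcompCell χ (D.cidV (D.vid C))) χ := by
        refine HEq.trans ?_ (D.vcompCell_cid χ)
        exact vcompCell_hcongr D rfl rfl rfl rfl rfl rfl rfl HEq.rfl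
          (heq_of_eq (D.cidV_vid C))
      have s4 : HEq (D.hcompCell (D.vcompCell (D.vcompCell (D.cidV h) ψ) φ)
            (D.vcompCell χ (D.cidV (D.vid C))))
          (D.hcompCell (D.cidV (D.vcomp h f)) χ) :=
        hcompCell_hcongr D rfl rfl rfl rfl
          (by rw [D.vcomp_vid]) (D.vcomp_vid (D.vcomp h f)) (D.vcomp_vid (D.vcomp k (D.vid C)))
          t1 t2
      exact ((s1.trans (heq_of_eq s3)).trans s4).trans (D.cidV_hcompCell χ)
    · -- uniqueness
      intro y hy
      refine eq_of_heq (HEq.symm ?_)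
      have hraw : HEq (transport D (D.hid_hcomp H) (D.vcomp_vid h) (D.vcomp_vid k)
          (D.hcomp_hid J) (D.hcompCell (D.vcompCell (D.cidV h) ψ) χ))
          (D.hcompCell (D.vcompCell (D.cidV h) ψ) χ) :=
        transport_heq D _ _ _ _ _
      refine hraw.trans ?_
      rw [hy]
      have s3 : D.hcompCell (D.vcompCell (D.cidV h) ψ) (D.vcompCell y φ)
          = D.vcompCell (D.hcompCell (D.cidV h) y) (D.hcompCell ψ φ) :=
        (D.interchange (D.cidV h) y ψ φ).symm
      rw [s3]
      have u1 : HEq (D.hcompCell (D.cidV h) y) y := D.cidV_hcompCell y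
      have s4 : HEq (D.vcompCell (D.hcompCell (D.cidV h) y) (D.hcompCell ψ φ))
          (D.vcompCell y (D.cid J)) :=
        vcompCell_hcongr D (D.hid_hcomp H) (D.hid_hcomp J) (D.hcomp_hid J)
          rfl rfl rfl rfl u1 comp2
      exact s4.trans (D.vcompCell_cid y)
end

section
/- In a double category, suppose cells (ε_f, η_f) define f* : A ⇸ C as the companion of f : A → C, and cells (ε_g, η_g) define g^* : D ⇸ B as the conjoint of g : B → D. Then for any horizontal morphism K : C ⇸ D, the horizontal composite cell ε_f ⊙ id_K ⊙ ε_g : f* ⊙ K ⊙ g^* ⇒ K (with vertical sides f and g) is cartesian; and for any horizontal morphism J : B ⇸ A, the horizontal composite η_g ⊙ id_J ⊙ η_f : J ⇒ g^* ⊙ J ⊙ f* is opcartesian. -/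
universe u v w x

namespace DoubleCat

/-- Transport a cell along equalities of its boundaries. -/
def ccast (D : DoubleCat) {A B C E : D.Obj} {J J' : D.Hor A B} {f f' : D.Ver A C}
    {g g' : D.Ver B E} {K K' : D.Hor C E}
    (hJ : J = J') (hf : f = f') (hg : g = g') (hK : K = K')
    (α : D.Cell J f g K) : D.Cell J' f' g' K' := by
  subst hJ hf hg hK; exact α

theorem ccast_heq (D : DoubleCat) {A B C E : D.Obj} {J J' : D.Hor A B} {f f' : D.Ver A C}
    {g g' : D.Ver B E} {K K' : D.Hor C E}
    (hJ : J = J') (hf : f = f') (hg : g = g') (hK : K = K')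
    (α : D.Cell J f g K) : HEq (D.ccast hJ hf hg hK α) α := by
  subst hJ hf hg hK; rfl

theorem vcongr (D : DoubleCat) {A B C E F G : D.Obj} {J J' : D.Hor A B} {K K' : D.Hor C E}
    {L L' : D.Hor F G} {f f' : D.Ver A C} {g g' : D.Ver B E}
    {h h' : D.Ver C F} {k k' : D.Ver E G}
    {α : D.Cell J f g K} {α' : D.Cell J' f' g' K'}
    {β : D.Cell K h k L} {β' : D.Cell K' h' k' L'}
    (hJ : J = J') (hK : K = K') (hL : L = L')
    (hf : f = f') (hg : g = g') (hh : h = h') (hk : k = k')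
    (hα : HEq α α') (hβ : HEq β β') :
    HEq (D.vcompCell α β) (D.vcompCell α' β') := by
  subst hJ hK hL hf hg hh hk
  obtain rfl := eq_of_heq hα
  obtain rfl := eq_of_heq hβ
  rfl

theorem hcongr (D : DoubleCat) {A B C A' B' C' : D.Obj} {J J' : D.Hor A B} {H H' : D.Hor B C}
    {K K' : D.Hor A' B'} {L L' : D.Hor B' C'} {f f' : D.Ver A A'} {g g' : D.Ver B B'}
    {h h' : D.Ver C C'}
    {α : D.Cell J f g K} {α' : D.Cell J' f' g' K'}
    {β : D.Cell H g h L} {β' : D.Cell H' g' h' L'}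
    (hJ : J = J') (hH : H = H') (hK : K = K') (hL : L = L')
    (hf : f = f') (hg : g = g') (hh : h = h')
    (hα : HEq α α') (hβ : HEq β β') :
    HEq (D.hcompCell α β) (D.hcompCell α' β') := by
  subst hJ hH hK hL hf hg hh
  obtain rfl := eq_of_heq hα
  obtain rfl := eq_of_heq hβ
  rfl

/-- The vertical opposite of a double category. -/
def co (D : DoubleCat) : DoubleCat where
  Obj := D.Obj
  Ver A B := D.Ver B A
  vid := D.vid
  vcomp f g := D.vcomp g f
  vid_vcomp f := D.vcomp_vid f
  vcomp_vid f := D.vid_vcomp f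
  vassoc f g h := (D.vassoc h g f).symm
  Hor := D.Hor
  hid := D.hid
  hcomp := D.hcomp
  hid_hcomp := D.hid_hcomp
  hcomp_hid := D.hcomp_hid
  hassoc := D.hassoc
  Cell J f g K := D.Cell K f g J
  cid := D.cid
  cidV f := D.cidV f
  vcompCell α β := D.vcompCell β α
  hcompCell α β := D.hcompCell α β
  cid_vcompCell α := D.vcompCell_cid α
  vcompCell_cid α := D.cid_vcompCell α
  vcompCell_assoc α β γ := (D.vcompCell_assoc γ β α).symm
  interchange φ χ ψ ξ := D.interchange ψ ξ φ χ
  cid_hcomp := D.cid_hcomp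
  cidV_vid := D.cidV_vid
  cidV_vcomp f g := D.cidV_vcomp g f
  hcompCell_assoc α β γ := D.hcompCell_assoc α β γ
  cidV_hcompCell α := D.cidV_hcompCell α
  hcompCell_cidV α := D.hcompCell_cidV α

theorem comp_conj_cart (D : DoubleCat) {A B C E : D.Obj}
    {f : D.Ver A C} {g : D.Ver B E} {fs : D.Hor A C} {gs : D.Hor E B}
    {eps_f : D.Cell fs f (D.vid C) (D.hid C)} {eta_f : D.Cell (D.hid A) (D.vid A) f fs}
    (hf : D.IsCompanion f fs eps_f eta_f)
    {eps_g : D.Cell gs (D.vid E) g (D.hid E)} {eta_g : D.Cell (D.hid B) g (D.vid B) gs}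
    (hg : D.IsConjoint g gs eps_g eta_g) (K : D.Hor C E) :
    D.IsCartesian (D.hcompCell (D.hcompCell eps_f (D.cid K)) eps_g) := by
  intro X Y H h k ψ
  have eK : D.hcomp (D.hcomp (D.hid C) K) (D.hid E) = K := by
    rw [D.hid_hcomp, D.hcomp_hid]
  have eH : D.hcomp (D.hcomp (D.hid X) H) (D.hid Y) = H := by
    rw [D.hid_hcomp, D.hcomp_hid]
  have eh : D.vcomp h (D.vid A) = h := D.vcomp_vid h
  have ek : D.vcomp k (D.vid B) = k := D.vcomp_vid k
  let φ := D.hcompCell (D.hcompCell eps_f (D.cid K)) eps_g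
  let ψc : D.Cell H (D.vcomp h f) (D.vcomp k g) K := D.ccast rfl rfl rfl eK ψ
  let Lc := D.vcompCell (D.cidV h) eta_f
  let Rc := D.vcompCell (D.cidV k) eta_g
  let ψ0 := D.hcompCell (D.hcompCell Lc ψc) Rc
  let w := D.ccast eH eh ek rfl ψ0
  refine ⟨w, ?_, ?_⟩
  · -- existence
    have h1 : HEq (D.vcompCell w φ) (D.vcompCell ψ0 φ) :=
      D.vcongr eH.symm rfl rfl eh.symm ek.symm rfl rfl
        (D.ccast_heq eH eh ek rfl ψ0) HEq.rfl
    have h2 : D.vcompCell ψ0 φ =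
        D.hcompCell (D.vcompCell (D.hcompCell Lc ψc) (D.hcompCell eps_f (D.cid K)))
          (D.vcompCell Rc eps_g) :=
      D.interchange (D.hcompCell Lc ψc) Rc (D.hcompCell eps_f (D.cid K)) eps_g
    have h3 : D.vcompCell (D.hcompCell Lc ψc) (D.hcompCell eps_f (D.cid K)) =
        D.hcompCell (D.vcompCell Lc eps_f) (D.vcompCell ψc (D.cid K)) :=
      D.interchange Lc ψc eps_f (D.cid K)
    have h4 : HEq (D.vcompCell Lc eps_f) (D.cidV (D.vcomp h f)) :=
      (D.vcompCell_assoc (D.cidV h) eta_f eps_f).trans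
        ((D.vcongr rfl rfl rfl rfl rfl (D.vid_vcomp f) (D.vcomp_vid f) HEq.rfl hf.1).trans
          (heq_of_eq (D.cidV_vcomp h f).symm))
    have h5 : HEq (D.vcompCell ψc (D.cid K)) ψc := D.vcompCell_cid ψc
    have h6 : HEq (D.vcompCell Rc eps_g) (D.cidV (D.vcomp k g)) :=
      (D.vcompCell_assoc (D.cidV k) eta_g eps_g).trans
        ((D.vcongr rfl rfl rfl rfl rfl (D.vcomp_vid g) (D.vid_vcomp g) HEq.rfl hg.1).trans
          (heq_of_eq (D.cidV_vcomp k g).symm))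
    have h7 : HEq (D.hcompCell (D.vcompCell Lc eps_f) (D.vcompCell ψc (D.cid K)))
        (D.hcompCell (D.cidV (D.vcomp h f)) ψc) :=
      D.hcongr rfl rfl rfl rfl (by rw [eh]) (D.vcomp_vid _) (D.vcomp_vid _) h4 h5
    have h8 : HEq (D.hcompCell (D.cidV (D.vcomp h f)) ψc) ψc := D.cidV_hcompCell ψc
    have hA : HEq (D.vcompCell (D.hcompCell Lc ψc) (D.hcompCell eps_f (D.cid K))) ψc :=
      (heq_of_eq h3).trans (h7.trans h8)
    have hB : HEq (D.hcompCell
          (D.vcompCell (D.hcompCell Lc ψc) (D.hcompCell eps_f (D.cid K)))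
          (D.vcompCell Rc eps_g))
        (D.hcompCell ψc (D.cidV (D.vcomp k g))) :=
      D.hcongr (D.hid_hcomp H) rfl (D.hid_hcomp K) rfl (by rw [eh]) (D.vcomp_vid _)
        (by rw [ek]) hA h6
    have hC : HEq (D.hcompCell ψc (D.cidV (D.vcomp k g))) ψc := D.hcompCell_cidV ψc
    have hD : HEq ψc ψ := D.ccast_heq rfl rfl rfl eK ψ
    exact (eq_of_heq (h1.trans ((heq_of_eq h2).trans (hB.trans (hC.trans hD))))).symm
  · -- uniqueness
    intro χ hχ
    have u1 : HEq ψc (D.vcompCell χ φ) :=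
      (D.ccast_heq rfl rfl rfl eK ψ).trans (heq_of_eq hχ)
    have u2 : HEq ψ0 (D.hcompCell (D.hcompCell Lc (D.vcompCell χ φ)) Rc) :=
      D.hcongr rfl rfl (congrArg (D.hcomp fs) eK.symm) rfl rfl rfl rfl
        (D.hcongr rfl rfl rfl eK.symm rfl rfl rfl HEq.rfl u1) HEq.rfl
    have e_in : D.hcompCell Lc (D.vcompCell χ φ) =
        D.vcompCell (D.hcompCell (D.cidV h) χ) (D.hcompCell eta_f φ) :=
      (D.interchange (D.cidV h) χ eta_f φ).symm
    have u3 : D.hcompCell (D.hcompCell Lc (D.vcompCell χ φ)) Rc =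
        D.vcompCell (D.hcompCell (D.hcompCell (D.cidV h) χ) (D.cidV k))
          (D.hcompCell (D.hcompCell eta_f φ) eta_g) := by
      rw [e_in]
      exact (D.interchange (D.hcompCell (D.cidV h) χ) (D.cidV k)
        (D.hcompCell eta_f φ) eta_g).symm
    have u4 : HEq (D.hcompCell (D.hcompCell (D.cidV h) χ) (D.cidV k)) χ :=
      (D.hcongr (D.hid_hcomp H) rfl (D.hid_hcomp _) rfl rfl rfl rfl
        (D.cidV_hcompCell χ) HEq.rfl).trans (D.hcompCell_cidV χ)
    have b2 : HEq (D.hcompCell eta_f (D.hcompCell eps_f (D.cid K)))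
        (D.hcompCell (D.hcompCell eta_f eps_f) (D.cid K)) :=
      (D.hcompCell_assoc eta_f eps_f (D.cid K)).symm
    have b3 : HEq (D.hcompCell (D.hcompCell eta_f eps_f) (D.cid K))
        (D.hcompCell (D.cid fs) (D.cid K)) :=
      D.hcongr (D.hid_hcomp fs) rfl (D.hcomp_hid fs) rfl rfl rfl rfl hf.2 HEq.rfl
    have b4 : HEq (D.hcompCell (D.cid fs) (D.cid K)) (D.cid (D.hcomp fs K)) :=
      heq_of_eq (D.cid_hcomp fs K).symm
    have b1 : HEq (D.hcompCell eta_f φ)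
        (D.hcompCell (D.hcompCell eta_f (D.hcompCell eps_f (D.cid K))) eps_g) :=
      (D.hcompCell_assoc eta_f (D.hcompCell eps_f (D.cid K)) eps_g).symm
    have bQ : HEq (D.hcompCell (D.hcompCell eta_f (D.hcompCell eps_f (D.cid K))) eps_g)
        (D.hcompCell (D.cid (D.hcomp fs K)) eps_g) :=
      D.hcongr (D.hid_hcomp _) rfl (by rw [D.hid_hcomp]) rfl rfl rfl rfl
        (b2.trans (b3.trans b4)) HEq.rfl
    have u5a : HEq (D.hcompCell (D.hcompCell eta_f φ) eta_g)
        (D.hcompCell (D.hcompCell (D.cid (D.hcomp fs K)) eps_g) eta_g) :=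
      D.hcongr (D.hid_hcomp _) rfl (by rw [eK, D.hcomp_hid]) rfl rfl rfl rfl
        (b1.trans bQ) HEq.rfl
    have u5b : HEq (D.hcompCell (D.hcompCell (D.cid (D.hcomp fs K)) eps_g) eta_g)
        (D.hcompCell (D.cid (D.hcomp fs K)) (D.hcompCell eps_g eta_g)) :=
      D.hcompCell_assoc _ _ _
    have u5c : HEq (D.hcompCell (D.cid (D.hcomp fs K)) (D.hcompCell eps_g eta_g))
        (D.hcompCell (D.cid (D.hcomp fs K)) (D.cid gs)) :=
      D.hcongr rfl (D.hcomp_hid gs) rfl (D.hid_hcomp gs) rfl rfl rfl HEq.rfl hg.2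
    have u5 : HEq (D.hcompCell (D.hcompCell eta_f φ) eta_g)
        (D.cid (D.hcomp (D.hcomp fs K) gs)) :=
      u5a.trans (u5b.trans (u5c.trans (heq_of_eq (D.cid_hcomp (D.hcomp fs K) gs).symm)))
    have u6 : HEq (D.vcompCell (D.hcompCell (D.hcompCell (D.cidV h) χ) (D.cidV k))
          (D.hcompCell (D.hcompCell eta_f φ) eta_g))
        (D.vcompCell χ (D.cid (D.hcomp (D.hcomp fs K) gs))) :=
      D.vcongr eH (by rw [D.hid_hcomp, D.hcomp_hid]) (by rw [eK]) rfl rfl rfl rfl u4 u5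
    have u7 : HEq (D.vcompCell χ (D.cid (D.hcomp (D.hcomp fs K) gs))) χ :=
      D.vcompCell_cid χ
    have final : HEq w χ :=
      (D.ccast_heq eH eh ek rfl ψ0).trans
        (u2.trans ((heq_of_eq u3).trans (u6.trans u7)))
    exact (eq_of_heq final).symm

end DoubleCat


/-- Given a companion `(εf, ηf)` of `f` and a conjoint `(εg, ηg)` of `g`, the cell
`εf ⊙ id_K ⊙ εg : f_* ⊙ K ⊙ g^* ⇒ K` is cartesian and `ηg ⊙ id_J ⊙ ηf : J ⇒ g^* ⊙ J ⊙ f_*`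
is opcartesian. -/
theorem stmt4 (D : DoubleCat) {A B C E : D.Obj}
    {f : D.Ver A C} {g : D.Ver B E} {fs : D.Hor A C} {gs : D.Hor E B}
    {eps_f : D.Cell fs f (D.vid C) (D.hid C)} {eta_f : D.Cell (D.hid A) (D.vid A) f fs}
    (hf : D.IsCompanion f fs eps_f eta_f)
    {eps_g : D.Cell gs (D.vid E) g (D.hid E)} {eta_g : D.Cell (D.hid B) g (D.vid B) gs}
    (hg : D.IsConjoint g gs eps_g eta_g) :
    (∀ (K : D.Hor C E), D.IsCartesian (D.hcompCell (D.hcompCell eps_f (D.cid K)) eps_g)) ∧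
    (∀ (J : D.Hor B A), D.IsOpcartesian (D.hcompCell (D.hcompCell eta_g (D.cid J)) eta_f)) := by
  constructor
  · exact fun K => DoubleCat.comp_conj_cart D hf hg K
  · intro J
    exact DoubleCat.comp_conj_cart (DoubleCat.co D) (f := g) (g := f) (fs := gs) (gs := fs)
      (eps_f := eta_g) (eta_f := eps_g) hg (eps_g := eta_f) (eta_g := eps_f) hf J
end

section
/- Let K be a double category, j : A → B a vertical morphism whose conjoint j^* : B ⇸ A exists, and d : B → M, r : A → M vertical morphisms. A vertical cell ε : r ∘ j ⇒ d defines r as the right Kan extension of d along j in the vertical 2-category V(K) if and only if the unique factorization ε' : j^* ⇒ 1_M (with vertical sides r and d) of ε through the opcartesian cell defining j^* defines r as the right Kan extension of d along the horizontal morphism j^* in K. -/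
universe u v w x

namespace DoubleCat

variable (D : DoubleCat)

/-- Congruence for vertical composition of cells along equalities of boundary data. -/
theorem vcomp_congr (D : DoubleCat) {A B C E F G : D.Obj}
    {J₁ J₂ : D.Hor A B} {K₁ K₂ : D.Hor C E} {L₁ L₂ : D.Hor F G}
    {f₁ f₂ : D.Ver A C} {g₁ g₂ : D.Ver B E} {h₁ h₂ : D.Ver C F} {k₁ k₂ : D.Ver E G}
    (hJ : J₁ = J₂) (hK : K₁ = K₂) (hL : L₁ = L₂)
    (hf : f₁ = f₂) (hg : g₁ = g₂) (hh : h₁ = h₂) (hk : k₁ = k₂)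
    {α₁ : D.Cell J₁ f₁ g₁ K₁} {α₂ : D.Cell J₂ f₂ g₂ K₂}
    {β₁ : D.Cell K₁ h₁ k₁ L₁} {β₂ : D.Cell K₂ h₂ k₂ L₂}
    (hα : HEq α₁ α₂) (hβ : HEq β₁ β₂) :
    HEq (D.vcompCell α₁ β₁) (D.vcompCell α₂ β₂) := by
  subst hJ; subst hK; subst hL; subst hf; subst hg; subst hh; subst hk
  cases hα; cases hβ; exact HEq.rfl

/-- Congruence for horizontal composition of cells along equalities of boundary data. -/
theorem hcomp_congr (D : DoubleCat) {A B C A' B' C' : D.Obj}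
    {J₁ J₂ : D.Hor A B} {H₁ H₂ : D.Hor B C}
    {K₁ K₂ : D.Hor A' B'} {L₁ L₂ : D.Hor B' C'}
    {f₁ f₂ : D.Ver A A'} {g₁ g₂ : D.Ver B B'} {h₁ h₂ : D.Ver C C'}
    (hJ : J₁ = J₂) (hH : H₁ = H₂) (hK : K₁ = K₂) (hL : L₁ = L₂)
    (hf : f₁ = f₂) (hg : g₁ = g₂) (hh : h₁ = h₂)
    {α₁ : D.Cell J₁ f₁ g₁ K₁} {α₂ : D.Cell J₂ f₂ g₂ K₂}
    {β₁ : D.Cell H₁ g₁ h₁ L₁} {β₂ : D.Cell H₂ g₂ h₂ L₂}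
    (hα : HEq α₁ α₂) (hβ : HEq β₁ β₂) :
    HEq (D.hcompCell α₁ β₁) (D.hcompCell α₂ β₂) := by
  subst hJ; subst hH; subst hK; subst hL; subst hf; subst hg; subst hh
  cases hα; cases hβ; exact HEq.rfl

end DoubleCat


/-- A vertical cell `ε : r ∘ j ⇒ d` defines `r` as the right Kan extension of `d` along
`j` in `V(K)` iff its factorisation `ε'` through the opcartesian cell defining the
conjoint `j^*` defines `r` as the right Kan extension of `d` along `j^*` in `K`. -/
theorem stmt8 (D : DoubleCat) {A B M : D.Obj}
    (j : D.Ver A B) (r : D.Ver B M) (d : D.Ver A M)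
    {js : D.Hor B A} {eps_j : D.Cell js (D.vid B) j (D.hid B)}
    {eta_j : D.Cell (D.hid A) j (D.vid A) js}
    (hj : D.IsConjoint j js eps_j eta_j)
    (ε : D.Cell (D.hid A) (D.vcomp j r) d (D.hid M))
    (ε' : D.Cell js r d (D.hid M))
    (hfact : HEq ε (D.vcompCell eta_j ε')) :
    D.IsRan2 j r d ε ↔ D.IsRan ε' := by
  obtain ⟨hj1, hj2⟩ := hj
  -- type equality used to normalise the boundary of `ψ' ⊙ ε'`
  have castχ : ∀ s : D.Ver B M,
      D.Cell (D.hcomp (D.hid B) js) s d (D.hcomp (D.hid M) (D.hid M)) =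
      D.Cell js s d (D.hid M) := by
    intro s; rw [D.hid_hcomp, D.hid_hcomp]
  -- type equality used to normalise the boundary of the inverse transpose
  have castφ : ∀ s : D.Ver B M,
      D.Cell (D.hcomp js (D.hid A)) (D.vcomp (D.vid B) s) d (D.hcomp (D.hid M) (D.hid M)) =
      D.Cell js s d (D.hid M) := by
    intro s; rw [D.hcomp_hid, D.vid_vcomp, D.hid_hcomp]
  -- Lemma A : the conjoint transpose is a retraction (Ψ ∘ Φ = id)
  have lemA : ∀ (s : D.Ver B M) (α : D.Cell js s d (D.hid M)),
      HEq (D.hcompCell (D.vcompCell eps_j (D.cidV s)) (D.vcompCell eta_j α)) α := by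
    intro s α
    rw [← D.interchange eps_j eta_j (D.cidV s) α]
    exact HEq.trans
      (D.vcomp_congr (D.hcomp_hid js) (D.hid_hcomp js) (D.hid_hcomp (D.hid M))
        rfl rfl rfl rfl hj2 (D.cidV_hcompCell α))
      (D.cid_vcompCell α)
  -- Lemma D : injectivity of Φ = vcompCell eta_j ∘ -
  have lemD : ∀ (s : D.Ver B M) (α₁ α₂ : D.Cell js s d (D.hid M)),
      D.vcompCell eta_j α₁ = D.vcompCell eta_j α₂ → α₁ = α₂ := by
    intro s α₁ α₂ hEq
    have h' := congrArg (D.hcompCell (D.vcompCell eps_j (D.cidV s))) hEq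
    exact eq_of_heq (((lemA s α₁).symm.trans (heq_of_eq h')).trans (lemA s α₂))
  -- Lemma C : the factorisation condition of `IsRan2` transposes to that of `IsRan`
  have lemC : ∀ (s : D.Ver B M) (ψ' : D.Cell (D.hid B) s r (D.hid M)),
      HEq (D.hcompCell (D.vcompCell (D.cidV j) ψ') ε)
          (D.vcompCell eta_j (cast (castχ s) (D.hcompCell ψ' ε'))) := by
    intro s ψ'
    refine HEq.trans
      (D.hcomp_congr rfl rfl rfl rfl rfl rfl (D.vid_vcomp d).symm (HEq.refl _) hfact) ?_
    rw [← D.interchange (D.cidV j) eta_j ψ' ε']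
    exact D.vcomp_congr (D.hid_hcomp (D.hid A)) (D.hid_hcomp js) (D.hid_hcomp (D.hid M))
      rfl rfl rfl rfl (D.cidV_hcompCell eta_j) (cast_heq _ _).symm
  -- Lemma B : the conjoint transpose is a section (Φ ∘ Ψ = id)
  have lemB : ∀ (s : D.Ver B M) (ψ : D.Cell (D.hid A) (D.vcomp j s) d (D.hid M)),
      HEq (D.vcompCell eta_j
        (cast (castφ s) (D.hcompCell (D.vcompCell eps_j (D.cidV s)) ψ))) ψ := by
    intro s ψ
    refine HEq.trans
      (D.vcomp_congr (D.hid_hcomp (D.hid A)).symm (D.hcomp_hid js).symm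
        (D.hid_hcomp (D.hid M)).symm rfl rfl (D.vid_vcomp s).symm rfl
        (D.hcompCell_cidV eta_j).symm (cast_heq _ _)) ?_
    rw [D.interchange eta_j (D.cidV (D.vid A)) (D.vcompCell eps_j (D.cidV s)) ψ]
    have hX : HEq (D.vcompCell eta_j (D.vcompCell eps_j (D.cidV s)))
        (D.cidV (D.vcomp j s)) := by
      refine HEq.trans (D.vcompCell_assoc eta_j eps_j (D.cidV s)).symm ?_
      refine HEq.trans
        (D.vcomp_congr rfl rfl rfl (D.vcomp_vid j) (D.vid_vcomp j) rfl rfl hj1 (HEq.refl _)) ?_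
      rw [← D.cidV_vcomp]
    have hY : HEq (D.vcompCell (D.cidV (D.vid A)) ψ) ψ := by
      rw [D.cidV_vid]
      exact D.cid_vcompCell ψ
    refine HEq.trans
      (D.hcomp_congr rfl rfl rfl rfl (by rw [D.vid_vcomp]) (D.vid_vcomp _) (D.vid_vcomp d)
        hX hY) ?_
    exact D.cidV_hcompCell ψ
  -- The two factorisation conditions correspond under the transpose bijection.
  have key : ∀ (s : D.Ver B M) (φ : D.Cell js s d (D.hid M))
      (ψ : D.Cell (D.hid A) (D.vcomp j s) d (D.hid M)),
      HEq ψ (D.vcompCell eta_j φ) →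
      ∀ ψ' : D.Cell (D.hid B) s r (D.hid M),
        (HEq ψ (D.hcompCell (D.vcompCell (D.cidV j) ψ') ε) ↔
          HEq φ (D.hcompCell ψ' ε')) := by
    intro s φ ψ hψφ ψ'
    constructor
    · intro h
      have h1 : HEq (D.vcompCell eta_j φ)
          (D.vcompCell eta_j (cast (castχ s) (D.hcompCell ψ' ε'))) :=
        (hψφ.symm.trans h).trans (lemC s ψ')
      have h2 : φ = cast (castχ s) (D.hcompCell ψ' ε') := lemD s _ _ (eq_of_heq h1)
      rw [h2]; exact cast_heq _ _
    · intro h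
      have h2 : φ = cast (castχ s) (D.hcompCell ψ' ε') :=
        eq_of_heq (h.trans (cast_heq (castχ s) (D.hcompCell ψ' ε')).symm)
      refine hψφ.trans ?_
      rw [h2]; exact (lemC s ψ').symm
  constructor
  · intro h s φ
    have hc : D.Cell (D.hid A) (D.vcomp j s) (D.vcomp (D.vid A) d) (D.hid M) =
        D.Cell (D.hid A) (D.vcomp j s) d (D.hid M) := by rw [D.vid_vcomp]
    have hψφ : HEq (cast hc (D.vcompCell eta_j φ)) (D.vcompCell eta_j φ) := cast_heq _ _
    obtain ⟨ψ', h1, h2⟩ := h s (cast hc (D.vcompCell eta_j φ))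
    exact ⟨ψ', (key s φ _ hψφ ψ').mp h1, fun y hy => h2 y ((key s φ _ hψφ y).mpr hy)⟩
  · intro h s ψ
    have hψφ : HEq ψ (D.vcompCell eta_j
        (cast (castφ s) (D.hcompCell (D.vcompCell eps_j (D.cidV s)) ψ))) :=
      (lemB s ψ).symm
    obtain ⟨ψ', h1, h2⟩ := h s (cast (castφ s) (D.hcompCell (D.vcompCell eps_j (D.cidV s)) ψ))
    exact ⟨ψ', (key s _ ψ hψφ ψ').mpr h1, fun y hy => h2 y ((key s _ ψ hψφ y).mp hy)⟩
end

section
/- In a double category, if a cell ε : J ⇒ 1_M (with vertical source r and vertical target d) defines r as the pointwise right Kan extension of d along J, then ε defines r as the right Kan extension of d along J. Conversely, if the pointwise right Kan extension of d along J exists and ε defines r as the (ordinary) right Kan extension of d along J, then ε defines r as the pointwise right Kan extension. -/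
universe u v w x

theorem DoubleCat.hcompCell_congr (D : DoubleCat) {A B C A' B' C' : D.Obj}
    {J1 J2 : D.Hor A B} {H1 H2 : D.Hor B C} {K1 K2 : D.Hor A' B'} {L1 L2 : D.Hor B' C'}
    {f : D.Ver A A'} {g : D.Ver B B'} {h : D.Ver C C'}
    {α1 : D.Cell J1 f g K1} {α2 : D.Cell J2 f g K2}
    {β1 : D.Cell H1 g h L1} {β2 : D.Cell H2 g h L2}
    (hJ : J1 = J2) (hK : K1 = K2) (hH : H1 = H2) (hL : L1 = L2)
    (hα : HEq α1 α2) (hβ : HEq β1 β2) :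
    HEq (D.hcompCell α1 β1) (D.hcompCell α2 β2) := by
  subst hJ; subst hK; subst hH; subst hL
  rw [eq_of_heq hα, eq_of_heq hβ]

/-- A pointwise right Kan extension is a right Kan extension; conversely, if the
pointwise right Kan extension of `d` along `J` exists then any cell defining an
ordinary right Kan extension defines a pointwise one. -/
theorem stmt9 (D : DoubleCat) {A B M : D.Obj} {J : D.Hor A B}
    {r : D.Ver A M} {d : D.Ver B M} (ε : D.Cell J r d (D.hid M)) :
    (D.IsPointwiseRan ε → D.IsRan ε) ∧
    ((∃ (r' : D.Ver A M) (ε' : D.Cell J r' d (D.hid M)), D.IsPointwiseRan ε') →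
      D.IsRan ε → D.IsPointwiseRan ε) := by
  have pw_to_ran : ∀ {A B M : D.Obj} {J : D.Hor A B} {r : D.Ver A M} {d : D.Ver B M}
      (ε : D.Cell J r d (D.hid M)), D.IsPointwiseRan ε → D.IsRan ε := by
    intro A B M J r d ε hpw s φ
    have e : D.Cell J s d (D.hid M) = D.Cell (D.hcomp (D.hid A) J) s d (D.hid M) := by
      rw [D.hid_hcomp]
    obtain ⟨φ', h1, h2⟩ := hpw (D.hid A) s (cast e φ)
    exact ⟨φ', (cast_heq e φ).symm.trans h1, fun y hy => h2 y ((cast_heq e φ).trans hy)⟩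
  refine ⟨pw_to_ran ε, ?_⟩
  rintro ⟨r', ε', hpw'⟩ hran
  have hran' := pw_to_ran ε' hpw'
  obtain ⟨σ, hσ, hσu⟩ := hran' r ε
  obtain ⟨ρ, hρ, hρu⟩ := hran r' ε'
  have e1 : D.Cell (D.hcomp (D.hid A) (D.hid A)) r r (D.hcomp (D.hid M) (D.hid M))
      = D.Cell (D.hid A) r r (D.hid M) := by rw [D.hcomp_hid, D.hcomp_hid]
  have hc1h : HEq (cast e1 (D.hcompCell σ ρ)) (D.hcompCell σ ρ) := cast_heq e1 _
  set c1 : D.Cell (D.hid A) r r (D.hid M) := cast e1 (D.hcompCell σ ρ) with hc1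
  have key : HEq ε (D.hcompCell c1 ε) :=
    hσ.trans <|
      (D.hcompCell_congr rfl rfl (D.hid_hcomp J).symm (D.hcomp_hid (D.hid M)).symm
        HEq.rfl hρ).trans <|
      (D.hcompCell_assoc σ ρ ε).symm.trans <|
      D.hcompCell_congr (D.hcomp_hid (D.hid A)) (D.hcomp_hid (D.hid M)) rfl rfl
        hc1h.symm HEq.rfl
  have hc1id : c1 = D.cidV r := by
    obtain ⟨τ, hτ, hτu⟩ := hran r ε
    rw [hτu c1 key, hτu (D.cidV r) (D.cidV_hcompCell ε).symm]
  intro C H s φ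
  obtain ⟨ψ, hψ, hψu⟩ := hpw' H s φ
  have e2 : D.Cell (D.hcomp H (D.hid A)) s r (D.hcomp (D.hid M) (D.hid M))
      = D.Cell H s r (D.hid M) := by rw [D.hcomp_hid, D.hcomp_hid]
  have hφ'h : HEq (cast e2 (D.hcompCell ψ ρ)) (D.hcompCell ψ ρ) := cast_heq e2 _
  set φ' : D.Cell H s r (D.hid M) := cast e2 (D.hcompCell ψ ρ) with hφ'
  refine ⟨φ', ?_, ?_⟩
  · exact hψ.trans <|
      (D.hcompCell_congr rfl rfl (D.hid_hcomp J).symm (D.hcomp_hid (D.hid M)).symm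
        HEq.rfl hρ).trans <|
      (D.hcompCell_assoc ψ ρ ε).symm.trans <|
      D.hcompCell_congr (D.hcomp_hid H) (D.hcomp_hid (D.hid M)) rfl rfl hφ'h.symm HEq.rfl
  · intro χ hχ
    have e3 : D.Cell (D.hcomp H (D.hid A)) s r' (D.hcomp (D.hid M) (D.hid M))
        = D.Cell H s r' (D.hid M) := by rw [D.hcomp_hid, D.hcomp_hid]
    have hχ'h : HEq (cast e3 (D.hcompCell χ σ)) (D.hcompCell χ σ) := cast_heq e3 _
    set χ' : D.Cell H s r' (D.hid M) := cast e3 (D.hcompCell χ σ) with hχ'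
    have hfac : HEq φ (D.hcompCell χ' ε') :=
      hχ.trans <|
        (D.hcompCell_congr rfl rfl (D.hid_hcomp J).symm (D.hcomp_hid (D.hid M)).symm
          HEq.rfl hσ).trans <|
        (D.hcompCell_assoc χ σ ε').symm.trans <|
        D.hcompCell_congr (D.hcomp_hid H) (D.hcomp_hid (D.hid M)) rfl rfl hχ'h.symm HEq.rfl
    have hχψ : χ' = ψ := hψu χ' hfac
    have hfin : HEq φ' χ := by
      refine (hφ'h.trans (hχψ ▸ HEq.rfl : HEq (D.hcompCell ψ ρ) (D.hcompCell χ' ρ))).trans ?_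
      refine ((D.hcompCell_congr (D.hcomp_hid H).symm (D.hcomp_hid (D.hid M)).symm rfl rfl
        hχ'h HEq.rfl).trans (D.hcompCell_assoc χ σ ρ)).trans ?_
      refine ((D.hcompCell_congr rfl rfl (D.hcomp_hid (D.hid A)) (D.hcomp_hid (D.hid M))
        HEq.rfl hc1h.symm).trans (hc1id ▸ HEq.rfl :
          HEq (D.hcompCell χ c1) (D.hcompCell χ (D.cidV r)))).trans ?_
      exact D.hcompCell_cidV χ
    exact (eq_of_heq hfin).symm
end

section
/- Pasting lemma for pointwise right Kan extensions: in a double category, given cells γ : J ⇒ 1_M (vertical sides s : A → M and r : B → M) and ε : H ⇒ 1_M (vertical sides r and d : C → M), if ε defines r as the pointwise right Kan extension of d along H, then γ defines s as the (pointwise) right Kan extension of r along J precisely if the horizontal composite γ ⊙ ε defines s as the (pointwise) right Kan extension of d along J ⊙ H. -/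
universe u v w x

namespace DoubleCat

theorem hcell_congr {D : DoubleCat} {A B C A' B' C' : D.Obj}
    {J₁ J₂ : D.Hor A B} {H₁ H₂ : D.Hor B C}
    {K₁ K₂ : D.Hor A' B'} {L₁ L₂ : D.Hor B' C'}
    {f : D.Ver A A'} {g : D.Ver B B'} {h : D.Ver C C'}
    (hJ : J₁ = J₂) (hH : H₁ = H₂) (hK : K₁ = K₂) (hL : L₁ = L₂)
    {α₁ : D.Cell J₁ f g K₁} {α₂ : D.Cell J₂ f g K₂} (hα : HEq α₁ α₂)
    {β₁ : D.Cell H₁ g h L₁} {β₂ : D.Cell H₂ g h L₂} (hβ : HEq β₁ β₂) :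
    HEq (D.hcompCell α₁ β₁) (D.hcompCell α₂ β₂) := by
  subst hJ; subst hH; subst hK; subst hL; cases hα; cases hβ; rfl

end DoubleCat

/-- Pasting lemma for pointwise right Kan extensions: if `ε` defines `r` as the pointwise
right Kan extension of `d` along `H`, then `γ` defines `s` as the (pointwise) right Kan
extension of `r` along `J` iff `γ ⊙ ε` defines `s` as the (pointwise) right Kan extension
of `d` along `J ⊙ H`. -/
theorem stmt10 (D : DoubleCat) {A B C M : D.Obj}
    {J : D.Hor A B} {H : D.Hor B C}
    {s : D.Ver A M} {r : D.Ver B M} {d : D.Ver C M}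
    (γ : D.Cell J s r (D.hid M)) (ε : D.Cell H r d (D.hid M))
    (hε : D.IsPointwiseRan ε) :
    (D.IsRan γ ↔
      D.IsRan (cast (congrArg (D.Cell (D.hcomp J H) s d) (D.hid_hcomp (D.hid M)))
        (D.hcompCell γ ε))) ∧
    (D.IsPointwiseRan γ ↔
      D.IsPointwiseRan (cast (congrArg (D.Cell (D.hcomp J H) s d) (D.hid_hcomp (D.hid M)))
        (D.hcompCell γ ε))) := by
  have hP : HEq (cast (congrArg (D.Cell (D.hcomp J H) s d) (D.hid_hcomp (D.hid M)))
      (D.hcompCell γ ε)) (D.hcompCell γ ε) := cast_heq _ _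
  constructor
  · constructor
    · -- IsRan γ → IsRan (γ ⊙ ε)
      intro hγ t ψ
      obtain ⟨ψ₁, hψ₁, uψ₁⟩ := hε J t ψ
      obtain ⟨φ', hφ', uφ'⟩ := hγ t ψ₁
      refine ⟨φ', ?_, ?_⟩
      · refine hψ₁.trans (HEq.trans (HEq.trans
          (DoubleCat.hcell_congr (D.hid_hcomp J).symm rfl (D.hid_hcomp (D.hid M)).symm rfl
            hφ' (HEq.refl ε))
          (D.hcompCell_assoc φ' γ ε)) ?_)
        exact DoubleCat.hcell_congr rfl rfl rfl (D.hid_hcomp (D.hid M))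
          (HEq.refl φ') hP.symm
      · intro χ hχ
        have e' : D.Cell (D.hcomp (D.hid A) J) t r (D.hcomp (D.hid M) (D.hid M))
            = D.Cell J t r (D.hid M) := by rw [D.hid_hcomp, D.hid_hcomp]
        have h1 : HEq ψ (D.hcompCell (cast e' (D.hcompCell χ γ)) ε) := by
          refine hχ.trans (HEq.trans (HEq.trans
            (DoubleCat.hcell_congr rfl rfl rfl (D.hid_hcomp (D.hid M)).symm
              (HEq.refl χ) hP)
            (D.hcompCell_assoc χ γ ε).symm) ?_)
          exact DoubleCat.hcell_congr (D.hid_hcomp J) rfl (D.hid_hcomp (D.hid M)) rfl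
            (cast_heq e' _).symm (HEq.refl ε)
        have h2 := uψ₁ _ h1
        refine uφ' χ ?_
        rw [← h2]
        exact cast_heq e' _
    · -- IsRan (γ ⊙ ε) → IsRan γ
      intro hPr t φ
      have e2 : D.Cell (D.hcomp J H) t d (D.hcomp (D.hid M) (D.hid M))
          = D.Cell (D.hcomp J H) t d (D.hid M) := by rw [D.hid_hcomp]
      obtain ⟨φ', hφ', uφ'⟩ := hPr t (cast e2 (D.hcompCell φ ε))
      obtain ⟨u, hu, uu⟩ := hε J t (cast e2 (D.hcompCell φ ε))
      have h1 : φ = u := uu φ (cast_heq e2 _)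
      have e' : D.Cell (D.hcomp (D.hid A) J) t r (D.hcomp (D.hid M) (D.hid M))
          = D.Cell J t r (D.hid M) := by rw [D.hid_hcomp, D.hid_hcomp]
      have h2 : cast e' (D.hcompCell φ' γ) = u := by
        refine uu _ ?_
        refine hφ'.trans (HEq.trans (HEq.trans
          (DoubleCat.hcell_congr rfl rfl rfl (D.hid_hcomp (D.hid M)).symm
            (HEq.refl φ') hP)
          (D.hcompCell_assoc φ' γ ε).symm) ?_)
        exact DoubleCat.hcell_congr (D.hid_hcomp J) rfl (D.hid_hcomp (D.hid M)) rfl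
          (cast_heq e' _).symm (HEq.refl ε)
      refine ⟨φ', ?_, ?_⟩
      · rw [h1, ← h2]
        exact cast_heq e' _
      · intro χ hχ
        refine uφ' χ ?_
        refine (cast_heq e2 _).trans (HEq.trans (HEq.trans
          (DoubleCat.hcell_congr (D.hid_hcomp J).symm rfl (D.hid_hcomp (D.hid M)).symm rfl
            hχ (HEq.refl ε))
          (D.hcompCell_assoc χ γ ε)) ?_)
        exact DoubleCat.hcell_congr rfl rfl rfl (D.hid_hcomp (D.hid M))
          (HEq.refl χ) hP.symm
  · constructor
    · -- pointwise forward
      intro hγ X G t ψ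
      have e3 : D.Cell (D.hcomp G (D.hcomp J H)) t d (D.hid M)
          = D.Cell (D.hcomp (D.hcomp G J) H) t d (D.hid M) := by rw [D.hassoc]
      obtain ⟨ψ₁, hψ₁, uψ₁⟩ := hε (D.hcomp G J) t (cast e3 ψ)
      obtain ⟨φ', hφ', uφ'⟩ := hγ G t ψ₁
      refine ⟨φ', ?_, ?_⟩
      · refine ((cast_heq e3 ψ).symm.trans hψ₁).trans (HEq.trans (HEq.trans
          (DoubleCat.hcell_congr rfl rfl (D.hid_hcomp (D.hid M)).symm rfl
            hφ' (HEq.refl ε))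
          (D.hcompCell_assoc φ' γ ε)) ?_)
        exact DoubleCat.hcell_congr rfl rfl rfl (D.hid_hcomp (D.hid M))
          (HEq.refl φ') hP.symm
      · intro χ hχ
        have e4 : D.Cell (D.hcomp G J) t r (D.hcomp (D.hid M) (D.hid M))
            = D.Cell (D.hcomp G J) t r (D.hid M) := by rw [D.hid_hcomp]
        have h1 : HEq (cast e3 ψ) (D.hcompCell (cast e4 (D.hcompCell χ γ)) ε) := by
          refine ((cast_heq e3 ψ).trans hχ).trans (HEq.trans (HEq.trans
            (DoubleCat.hcell_congr rfl rfl rfl (D.hid_hcomp (D.hid M)).symm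
              (HEq.refl χ) hP)
            (D.hcompCell_assoc χ γ ε).symm) ?_)
          exact DoubleCat.hcell_congr rfl rfl (D.hid_hcomp (D.hid M)) rfl
            (cast_heq e4 _).symm (HEq.refl ε)
        have h2 := uψ₁ _ h1
        refine uφ' χ ?_
        rw [← h2]
        exact cast_heq e4 _
    · -- pointwise backward
      intro hPr X G t φ
      have e5 : D.Cell (D.hcomp (D.hcomp G J) H) t d (D.hcomp (D.hid M) (D.hid M))
          = D.Cell (D.hcomp G (D.hcomp J H)) t d (D.hid M) := by
        rw [D.hassoc, D.hid_hcomp]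
      have e6 : D.Cell (D.hcomp (D.hcomp G J) H) t d (D.hcomp (D.hid M) (D.hid M))
          = D.Cell (D.hcomp (D.hcomp G J) H) t d (D.hid M) := by rw [D.hid_hcomp]
      obtain ⟨φ', hφ', uφ'⟩ := hPr G t (cast e5 (D.hcompCell φ ε))
      obtain ⟨u, hu, uu⟩ := hε (D.hcomp G J) t (cast e6 (D.hcompCell φ ε))
      have h1 : φ = u := uu φ (cast_heq e6 _)
      have e4 : D.Cell (D.hcomp G J) t r (D.hcomp (D.hid M) (D.hid M))
          = D.Cell (D.hcomp G J) t r (D.hid M) := by rw [D.hid_hcomp]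
      have h2 : cast e4 (D.hcompCell φ' γ) = u := by
        refine uu _ ?_
        refine ((cast_heq e6 _).trans ((cast_heq e5 _).symm.trans hφ')).trans
          (HEq.trans (HEq.trans
            (DoubleCat.hcell_congr rfl rfl rfl (D.hid_hcomp (D.hid M)).symm
              (HEq.refl φ') hP)
            (D.hcompCell_assoc φ' γ ε).symm) ?_)
        exact DoubleCat.hcell_congr rfl rfl (D.hid_hcomp (D.hid M)) rfl
          (cast_heq e4 _).symm (HEq.refl ε)
      refine ⟨φ', ?_, ?_⟩
      · rw [h1, ← h2]
        exact cast_heq e4 _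
      · intro χ hχ
        refine uφ' χ ?_
        refine (cast_heq e5 _).trans (HEq.trans (HEq.trans
          (DoubleCat.hcell_congr rfl rfl (D.hid_hcomp (D.hid M)).symm rfl
            hχ (HEq.refl ε))
          (D.hcompCell_assoc χ γ ε)) ?_)
        exact DoubleCat.hcell_congr rfl rfl rfl (D.hid_hcomp (D.hid M))
          (HEq.refl χ) hP.symm
end

section
/- In a double category, let g : B → D be a vertical morphism whose companion g* exists. Then any opcartesian cell φ : J ⇒ K with identity vertical source and vertical target g (defining K as the extension of J : A ⇸ B along g on the right) is both initial and pointwise initial: for any cell ε : K ⇒ 1_M with vertical sides r and d, ε defines r as the (pointwise) right Kan extension of d along K if and only if ε ∘ φ defines r as the (pointwise) right Kan extension of d ∘ g along J. -/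
universe u v w x

/-! With a companion `g*`, whiskering the companion unit gives an opcartesian cell
`J ⇒ J ⊙ g*` with sides `1` and `g`. Opcartesian cells with the same source and sides have
isomorphic targets, so `K ≅ J ⊙ g*`, and this survives whiskering by any `H` on the left:
`1_H ⊙ φ` is again opcartesian. Precomposition with `1_H ⊙ φ` is therefore a bijection from
cells `H ⊙ K ⇒ 1_M` to cells `H ⊙ J ⇒ 1_M` with right side `g ; d`, and interchange shows that
it carries factorizations through `ε` to factorizations through `φ ; ε`. The case `H = 1_A` is
initiality, arbitrary `H` is pointwise initiality. -/

theorem forall_existsUnique_heq_congr {α β δ : Sort u} {γ : Sort v} (e : α = β) (F : γ → δ) :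
    (∀ a : α, ∃! c, HEq a (F c)) ↔ ∀ b : β, ∃! c, HEq b (F c) := by
  subst e; rfl

namespace DoubleCat

variable {D : DoubleCat}

section Opcartesian

variable {A B C E : D.Obj} {J : D.Hor A B} {K K' : D.Hor C E} {f : D.Ver A C} {g : D.Ver B E}
  {φ : D.Cell J f g K}

theorem IsOpcartesian.exists_heq (hφ : D.IsOpcartesian φ) {X Y : D.Obj} {L : D.Hor X Y}
    {h : D.Ver C X} {k : D.Ver E Y} {f' : D.Ver A X} {g' : D.Ver B Y} (χ : D.Cell J f' g' L)
    (hf : f' = D.vcomp f h) (hg : g' = D.vcomp g k) :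
    ∃ χ' : D.Cell K h k L, HEq χ (D.vcompCell φ χ') := by
  subst hf hg
  obtain ⟨χ', rfl, -⟩ := hφ L h k χ
  exact ⟨χ', HEq.rfl⟩

theorem IsOpcartesian.heq_of_vcompCell_heq (hφ : D.IsOpcartesian φ) {X Y : D.Obj}
    {L L' : D.Hor X Y} {h h' : D.Ver C X} {k k' : D.Ver E Y}
    {χ : D.Cell K h k L} {χ' : D.Cell K h' k' L'} (eh : h = h') (ek : k = k') (eL : L = L')
    (hχ : HEq (D.vcompCell φ χ) (D.vcompCell φ χ')) : HEq χ χ' := by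
  subst eh ek eL
  obtain ⟨_, -, huniq⟩ := hφ L h k (D.vcompCell φ χ)
  exact heq_of_eq ((huniq χ rfl).trans (huniq χ' (eq_of_heq hχ)).symm)

theorem IsOpcartesian.of_heq {J' : D.Hor A B} {f' : D.Ver A C} {g' : D.Ver B E}
    {φ' : D.Cell J' f' g' K'} (hφ : D.IsOpcartesian φ) (eJ : J = J') (ef : f = f')
    (eg : g = g') (eK : K = K') (h : HEq φ φ') : D.IsOpcartesian φ' := by
  subst eJ ef eg eK
  exact eq_of_heq h ▸ hφ

theorem IsOpcartesian.exists_retract {ψ : D.Cell J f g K'} (hφ : D.IsOpcartesian φ)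
    (hψ : D.IsOpcartesian ψ) :
    ∃ (θ : D.Cell K (D.vid C) (D.vid E) K') (θ' : D.Cell K' (D.vid C) (D.vid E) K),
      HEq (D.vcompCell φ θ) ψ ∧ HEq (D.vcompCell ψ θ') φ ∧
        HEq (D.vcompCell θ θ') (D.cid K) := by
  obtain ⟨θ, hθ⟩ := hφ.exists_heq ψ (D.vcomp_vid f).symm (D.vcomp_vid g).symm
  obtain ⟨θ', hθ'⟩ := hψ.exists_heq φ (D.vcomp_vid f).symm (D.vcomp_vid g).symm
  refine ⟨θ, θ', hθ.symm, hθ'.symm,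
    hφ.heq_of_vcompCell_heq (D.vid_vcomp _) (D.vid_vcomp _) rfl ?_⟩
  have hφθθ' : HEq (D.vcompCell (D.vcompCell φ θ) θ') (D.vcompCell ψ θ') := by
    have := hθ.symm
    congr 1
    · exact D.vcomp_vid f
    · exact D.vcomp_vid g
  exact (D.vcompCell_assoc φ θ θ').symm.trans
    (hφθθ'.trans (hθ'.symm.trans (D.vcompCell_cid φ).symm))

theorem IsOpcartesian.of_retract {ψ : D.Cell J f g K'} (hψ : D.IsOpcartesian ψ)
    (θ : D.Cell K (D.vid C) (D.vid E) K') (θ' : D.Cell K' (D.vid C) (D.vid E) K)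
    (hθ : HEq (D.vcompCell φ θ) ψ) (hθ' : HEq (D.vcompCell ψ θ') φ)
    (hθθ' : HEq (D.vcompCell θ θ') (D.cid K)) : D.IsOpcartesian φ := by
  intro X Y L h k χ
  obtain ⟨χ₁, hχ₁⟩ := hψ.exists_heq χ rfl rfl
  obtain ⟨w, hw⟩ : ∃ w : D.Cell K h k L, HEq w (D.vcompCell θ χ₁) :=
    ⟨cast (by rw [D.vid_vcomp, D.vid_vcomp]) _, cast_heq _ _⟩
  refine ⟨w, eq_of_heq ?_, fun χ' hχ' => eq_of_heq ?_⟩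
  · have hψχ₁ : HEq (D.vcompCell ψ χ₁) (D.vcompCell (D.vcompCell φ θ) χ₁) := by
      have := hθ.symm
      congr 1 <;> simp only [D.vcomp_vid]
    have hφθχ₁ : HEq (D.vcompCell φ (D.vcompCell θ χ₁)) (D.vcompCell φ w) := by
      have := hw.symm
      congr 1 <;> simp only [D.vid_vcomp]
    exact hχ₁.trans (hψχ₁.trans ((D.vcompCell_assoc φ θ χ₁).trans hφθχ₁))
  · have hθ'χ' : HEq (D.vcompCell θ' χ') χ₁ := by
      refine hψ.heq_of_vcompCell_heq (D.vid_vcomp h) (D.vid_vcomp k) rfl ?_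
      have hψθ'χ' : HEq (D.vcompCell (D.vcompCell ψ θ') χ') (D.vcompCell φ χ') := by
        congr 1 <;> simp only [D.vcomp_vid]
      exact (D.vcompCell_assoc ψ θ' χ').symm.trans
        (hψθ'χ'.trans ((heq_of_eq hχ').symm.trans hχ₁))
    have hθθ'χ' : HEq (D.vcompCell (D.vcompCell θ θ') χ') (D.vcompCell (D.cid K) χ') := by
      congr 1 <;> simp only [D.vid_vcomp]
    have hθχ₁ : HEq (D.vcompCell θ (D.vcompCell θ' χ')) (D.vcompCell θ χ₁) := by
      congr 1 <;> simp only [D.vid_vcomp]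
    exact (D.cid_vcompCell χ').symm.trans (hθθ'χ'.symm.trans
      ((D.vcompCell_assoc θ θ' χ').trans (hθχ₁.trans hw.symm)))

end Opcartesian

section Whisker

variable {A B C B' B'' : D.Obj} {H : D.Hor C A}

theorem vcompCell_cid_hcompCell_heq {J : D.Hor A B} {K : D.Hor A B'} {L : D.Hor A B''}
    {g : D.Ver B B'} {g' : D.Ver B' B''} {g'' : D.Ver B B''} {α : D.Cell J (D.vid A) g K}
    {β : D.Cell K (D.vid A) g' L} {γ : D.Cell J (D.vid A) g'' L} (e : D.vcomp g g' = g'')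
    (hγ : HEq (D.vcompCell α β) γ) :
    HEq (D.vcompCell (D.hcompCell (D.cid H) α) (D.hcompCell (D.cid H) β))
      (D.hcompCell (D.cid H) γ) := by
  rw [D.interchange]
  have := D.cid_vcompCell (D.cid H)
  congr 1 <;> exact D.vid_vcomp _

end Whisker

section Companion

variable {B E : D.Obj} {g : D.Ver B E} {gs : D.Hor B E} {eps : D.Cell gs g (D.vid E) (D.hid E)}
  {eta : D.Cell (D.hid B) (D.vid B) g gs}

theorem IsCompanion.vcompCell_vcompCell_cidV_heq (hc : D.IsCompanion g gs eps eta) {Y : D.Obj}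
    (k : D.Ver E Y) :
    HEq (D.vcompCell eta (D.vcompCell eps (D.cidV k))) (D.cidV (D.vcomp g k)) := by
  have hηε : HEq (D.vcompCell (D.vcompCell eta eps) (D.cidV k))
      (D.vcompCell (D.cidV g) (D.cidV k)) := by
    have := hc.1
    congr 1
    · exact D.vid_vcomp g
    · exact D.vcomp_vid g
  exact (D.vcompCell_assoc eta eps (D.cidV k)).symm.trans
    (hηε.trans (heq_of_eq (D.cidV_vcomp g k).symm))

theorem IsCompanion.cid_hcomp_heq (hc : D.IsCompanion g gs eps eta) {C : D.Obj}
    (J : D.Hor C B) :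
    HEq (D.cid (D.hcomp J gs)) (D.hcompCell (D.hcompCell (D.cid J) eta) eps) := by
  have hJηε : HEq (D.hcompCell (D.cid J) (D.cid gs))
      (D.hcompCell (D.cid J) (D.hcompCell eta eps)) := by
    have := hc.2.symm
    congr 1
    · exact (D.hid_hcomp gs).symm
    · exact (D.hcomp_hid gs).symm
  rw [D.cid_hcomp]
  exact hJηε.trans (D.hcompCell_assoc (D.cid J) eta eps).symm

theorem IsCompanion.isOpcartesian (hc : D.IsCompanion g gs eps eta) {C : D.Obj}
    {J : D.Hor C B} {κ : D.Cell J (D.vid C) g (D.hcomp J gs)}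
    (hκ : HEq κ (D.hcompCell (D.cid J) eta)) : D.IsOpcartesian κ := by
  intro X Y L h k χ
  obtain ⟨w, hw⟩ : ∃ w : D.Cell (D.hcomp J gs) h k L,
      HEq w (D.hcompCell χ (D.vcompCell eps (D.cidV k))) :=
    ⟨cast (by simp only [D.hcomp_hid, D.vid_vcomp]) _, cast_heq _ _⟩
  refine ⟨w, eq_of_heq ?_, fun χ' hfac => eq_of_heq ?_⟩
  · have hκw : HEq (D.vcompCell κ w) (D.vcompCell (D.hcompCell (D.cid J) eta)
        (D.hcompCell χ (D.vcompCell eps (D.cidV k)))) := by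
      congr 1 <;> simp only [D.hcomp_hid, D.vid_vcomp]
    have hχ : HEq (D.hcompCell (D.vcompCell (D.cid J) χ)
        (D.vcompCell eta (D.vcompCell eps (D.cidV k))))
        (D.hcompCell χ (D.cidV (D.vcomp g k))) := by
      have := D.cid_vcompCell χ
      have := hc.vcompCell_vcompCell_cidV_heq k
      congr 1 <;> simp only [D.vid_vcomp]
    rw [D.interchange] at hκw
    exact (hκw.trans (hχ.trans (D.hcompCell_cidV χ))).symm
  · have hχ' : HEq (D.vcompCell (D.cid (D.hcomp J gs)) χ')
        (D.vcompCell (D.hcompCell (D.hcompCell (D.cid J) eta) eps)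
          (D.hcompCell χ' (D.cidV k))) := by
      have := hc.cid_hcomp_heq J
      have := (D.hcompCell_cidV χ').symm
      congr 1 <;> simp only [D.hcomp_hid]
    have hκχ' : HEq (D.hcompCell (D.vcompCell (D.hcompCell (D.cid J) eta) χ')
        (D.vcompCell eps (D.cidV k))) (D.hcompCell χ (D.vcompCell eps (D.cidV k))) := by
      have : HEq (D.vcompCell (D.hcompCell (D.cid J) eta) χ') χ := by
        have := hκ.symm
        rw [hfac]
        congr 1
        exact D.hcomp_hid J
      congr 1
      exact D.hcomp_hid J
    rw [D.interchange] at hχ'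
    exact (D.cid_vcompCell χ').symm.trans (hχ'.trans (hκχ'.trans hw.symm))

theorem IsOpcartesian.cid_hcompCell (hc : D.IsCompanion g gs eps eta) {A : D.Obj}
    {J : D.Hor A B} {K : D.Hor A E} {φ : D.Cell J (D.vid A) g K} (hφ : D.IsOpcartesian φ)
    {C : D.Obj} (H : D.Hor C A) : D.IsOpcartesian (D.hcompCell (D.cid H) φ) := by
  obtain ⟨κ, hκ⟩ : ∃ κ : D.Cell J (D.vid A) g (D.hcomp J gs),
      HEq κ (D.hcompCell (D.cid J) eta) :=
    ⟨cast (by rw [D.hcomp_hid]) _, cast_heq _ _⟩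
  obtain ⟨θ, θ', hθ, hθ', hθθ'⟩ := hφ.exists_retract (hc.isOpcartesian hκ)
  have hκH : D.IsOpcartesian (D.hcompCell (D.cid H) κ) := by
    obtain ⟨κH, hκH⟩ : ∃ κH : D.Cell (D.hcomp H J) (D.vid C) g (D.hcomp (D.hcomp H J) gs),
        HEq κH (D.hcompCell (D.cid (D.hcomp H J)) eta) :=
      ⟨cast (by rw [D.hcomp_hid]) _, cast_heq _ _⟩
    refine IsOpcartesian.of_heq (hc.isOpcartesian hκH) rfl rfl rfl (D.hassoc H J gs) ?_
    have hHκ : HEq (D.hcompCell (D.cid H) (D.hcompCell (D.cid J) eta))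
        (D.hcompCell (D.cid H) κ) := by
      have := hκ.symm
      congr 1
      exact D.hcomp_hid J
    rw [D.cid_hcomp] at hκH
    exact hκH.trans ((D.hcompCell_assoc _ _ _).trans hHκ)
  have hθθ'H : HEq (D.vcompCell (D.hcompCell (D.cid H) θ) (D.hcompCell (D.cid H) θ'))
      (D.cid (D.hcomp H K)) := by
    rw [D.cid_hcomp]
    exact vcompCell_cid_hcompCell_heq (D.vid_vcomp _) hθθ'
  -- unfolding `IsOpcartesian` first keeps `exact` from instantiating its implicit binders
  intro X Y
  exact hκH.of_retract _ _ (vcompCell_cid_hcompCell_heq (D.vcomp_vid g) hθ)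
    (vcompCell_cid_hcompCell_heq (D.vcomp_vid g) hθ') hθθ'H

end Companion

section Kan

variable {A B E C M : D.Obj} {g : D.Ver B E} {J : D.Hor A B} {K : D.Hor A E}
  {φ : D.Cell J (D.vid A) g K} {r : D.Ver A M} {d : D.Ver E M}

theorem existsUnique_hcompCell_iff {H : D.Hor C A}
    (hφH : D.IsOpcartesian (D.hcompCell (D.cid H) φ)) (ε : D.Cell K r d (D.hid M))
    (s : D.Ver C M) :
    (∀ χ : D.Cell (D.hcomp H K) s d (D.hid M),
      ∃! α : D.Cell H s r (D.hid M), HEq χ (D.hcompCell α ε)) ↔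
    ∀ ψ : D.Cell (D.hcomp H J) s (D.vcomp g d) (D.hid M),
      ∃! β : D.Cell H s (D.vcomp (D.vid A) r) (D.hid M),
        HEq ψ (D.hcompCell β (D.vcompCell φ ε)) := by
  have key : ∀ {α : D.Cell H s r (D.hid M)} {β : D.Cell H s (D.vcomp (D.vid A) r) (D.hid M)},
      HEq α β → HEq (D.vcompCell (D.hcompCell (D.cid H) φ) (D.hcompCell α ε))
        (D.hcompCell β (D.vcompCell φ ε)) := by
    intro α β hαβ
    rw [D.interchange]
    have := (D.cid_vcompCell α).trans hαβ
    congr 1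
    exact D.vid_vcomp s
  have keyχ : ∀ {χ : D.Cell (D.hcomp H K) s d (D.hid M)} {α : D.Cell H s r (D.hid M)}
      {β : D.Cell H s (D.vcomp (D.vid A) r) (D.hid M)}, HEq χ (D.hcompCell α ε) → HEq α β →
      HEq (D.vcompCell (D.hcompCell (D.cid H) φ) χ) (D.hcompCell β (D.vcompCell φ ε)) := by
    intro χ α β hχα hαβ
    refine HEq.trans ?_ (key hαβ)
    congr 1
    exact (D.hid_hcomp _).symm
  constructor
  · intro hK ψ
    obtain ⟨χ, hψχ⟩ := hφH.exists_heq ψ (D.vid_vcomp s).symm rfl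
    obtain ⟨α, hχα, hα⟩ := hK χ
    obtain ⟨β, hβα⟩ : ∃ β : D.Cell H s (D.vcomp (D.vid A) r) (D.hid M), HEq β α :=
      ⟨cast (by rw [D.vid_vcomp]) α, cast_heq _ _⟩
    refine ⟨β, hψχ.trans (keyχ hχα hβα.symm), fun β' hψβ' => ?_⟩
    obtain ⟨α', hα'β'⟩ : ∃ α' : D.Cell H s r (D.hid M), HEq α' β' :=
      ⟨cast (by rw [D.vid_vcomp]) β', cast_heq _ _⟩
    have hχα' : HEq χ (D.hcompCell α' ε) := hφH.heq_of_vcompCell_heq rfl rfl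
      (D.hid_hcomp _).symm (hψχ.symm.trans (hψβ'.trans (key hα'β').symm))
    exact eq_of_heq (hα'β'.symm.trans ((heq_of_eq (hα α' hχα')).trans hβα.symm))
  · intro hJ χ
    obtain ⟨ψ, hψ⟩ : ∃ ψ : D.Cell (D.hcomp H J) s (D.vcomp g d) (D.hid M),
        HEq ψ (D.vcompCell (D.hcompCell (D.cid H) φ) χ) :=
      ⟨cast (by rw [D.vid_vcomp]) _, cast_heq _ _⟩
    obtain ⟨β, hψβ, hβ⟩ := hJ ψ
    obtain ⟨α, hαβ⟩ : ∃ α : D.Cell H s r (D.hid M), HEq α β :=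
      ⟨cast (by rw [D.vid_vcomp]) β, cast_heq _ _⟩
    refine ⟨α, hφH.heq_of_vcompCell_heq rfl rfl (D.hid_hcomp _).symm
      (hψ.symm.trans (hψβ.trans (key hαβ).symm)), fun α' hχα' => ?_⟩
    obtain ⟨β', hα'β'⟩ : ∃ β' : D.Cell H s (D.vcomp (D.vid A) r) (D.hid M), HEq α' β' :=
      ⟨cast (by rw [D.vid_vcomp]) α', (cast_heq _ _).symm⟩
    exact eq_of_heq (hα'β'.trans ((heq_of_eq (hβ β' (hψ.trans (keyχ hχα' hα'β')))).trans
      hαβ.symm))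

end Kan
end DoubleCat

/-- An opcartesian cell with identity vertical source, along a vertical morphism `g`
whose companion exists, is both initial and pointwise initial. -/
theorem stmt12 (D : DoubleCat) {A B Dd : D.Obj} (g : D.Ver B Dd)
    (hg : ∃ gs eps eta, D.IsCompanion g gs eps eta)
    {J : D.Hor A B} {K : D.Hor A Dd}
    (φ : D.Cell J (D.vid A) g K) (hφ : D.IsOpcartesian φ)
    {M : D.Obj} {r : D.Ver A M} {d : D.Ver Dd M} (ε : D.Cell K r d (D.hid M)) :
    (D.IsRan ε ↔ D.IsRan (D.vcompCell φ ε)) ∧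
    (D.IsPointwiseRan ε ↔ D.IsPointwiseRan (D.vcompCell φ ε)) := by
  obtain ⟨gs, eps, eta, hc⟩ := hg
  have hφH : ∀ {C : D.Obj} (H : D.Hor C A), D.IsOpcartesian (D.hcompCell (D.cid H) φ) :=
    fun H => hφ.cid_hcompCell hc H
  refine ⟨forall_congr' fun s => ?_, ⟨fun hε _ H s => ?_, fun hφε _ H s => ?_⟩⟩
  · exact (forall_existsUnique_heq_congr (by rw [D.hid_hcomp]) _).trans
      ((DoubleCat.existsUnique_hcompCell_iff (hφH (D.hid A)) ε s).trans
        (forall_existsUnique_heq_congr (by rw [D.hid_hcomp]) _))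
  · exact (DoubleCat.existsUnique_hcompCell_iff (hφH H) ε s).1 (hε H s)
  · exact (DoubleCat.existsUnique_hcompCell_iff (hφH H) ε s).2 (hφε H s)
end

section
/- In a double category, let f : A → C be a vertical morphism whose companion f* exists. Then any cartesian cell J ⇒ K with vertical source f and identity vertical target (defining J as the restriction K(f, id) of K : C ⇸ B along f) is pointwise right exact: if ε : K ⇒ 1_M defines r as the pointwise right Kan extension of d along K, then ε composed with the cartesian cell defines r ∘ f as the pointwise right Kan extension of d along J. -/
universe u v w x

namespace DoubleCat

variable {D : DoubleCat}

theorem vcompCell_congr_s13 {A B C E F G : D.Obj}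
    {J₁ J₂ : D.Hor A B} {K₁ K₂ : D.Hor C E} {L₁ L₂ : D.Hor F G}
    {f₁ f₂ : D.Ver A C} {g₁ g₂ : D.Ver B E} {h₁ h₂ : D.Ver C F} {k₁ k₂ : D.Ver E G}
    (hJ : J₁ = J₂) (hK : K₁ = K₂) (hL : L₁ = L₂)
    (hf : f₁ = f₂) (hg : g₁ = g₂) (hh : h₁ = h₂) (hk : k₁ = k₂)
    {α₁ : D.Cell J₁ f₁ g₁ K₁} {α₂ : D.Cell J₂ f₂ g₂ K₂}
    {β₁ : D.Cell K₁ h₁ k₁ L₁} {β₂ : D.Cell K₂ h₂ k₂ L₂}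
    (hα : HEq α₁ α₂) (hβ : HEq β₁ β₂) :
    HEq (D.vcompCell α₁ β₁) (D.vcompCell α₂ β₂) := by
  subst hJ; subst hK; subst hL; subst hf; subst hg; subst hh; subst hk
  rw [eq_of_heq hα, eq_of_heq hβ]

theorem hcompCell_congr_s13 {A B C A' B' C' : D.Obj}
    {J₁ J₂ : D.Hor A B} {H₁ H₂ : D.Hor B C}
    {K₁ K₂ : D.Hor A' B'} {L₁ L₂ : D.Hor B' C'}
    {f₁ f₂ : D.Ver A A'} {g₁ g₂ : D.Ver B B'} {h₁ h₂ : D.Ver C C'}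
    (hJ : J₁ = J₂) (hH : H₁ = H₂) (hK : K₁ = K₂) (hL : L₁ = L₂)
    (hf : f₁ = f₂) (hg : g₁ = g₂) (hh : h₁ = h₂)
    {α₁ : D.Cell J₁ f₁ g₁ K₁} {α₂ : D.Cell J₂ f₂ g₂ K₂}
    {β₁ : D.Cell H₁ g₁ h₁ L₁} {β₂ : D.Cell H₂ g₂ h₂ L₂}
    (hα : HEq α₁ α₂) (hβ : HEq β₁ β₂) :
    HEq (D.hcompCell α₁ β₁) (D.hcompCell α₂ β₂) := by
  subst hJ; subst hH; subst hK; subst hL; subst hf; subst hg; subst hh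
  rw [eq_of_heq hα, eq_of_heq hβ]

end DoubleCat

/-- A cartesian cell with identity vertical target, along a vertical morphism `f`
whose companion exists, is pointwise right exact. -/
theorem stmt13 (D : DoubleCat) {A B C : D.Obj} (f : D.Ver A C)
    (hf : ∃ fs eps eta, D.IsCompanion f fs eps eta)
    {J : D.Hor A B} {K : D.Hor C B}
    (φ : D.Cell J f (D.vid B) K) (hφ : D.IsCartesian φ)
    {M : D.Obj} {r : D.Ver C M} {d : D.Ver B M} (ε : D.Cell K r d (D.hid M))
    (hε : D.IsPointwiseRan ε) :
    D.IsPointwiseRan (D.vcompCell φ ε) := by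
  obtain ⟨fs, eps, eta, hc1, _hc2⟩ := hf
  intro X H s ψ
  -- ζ : J ⇒ fs⊙K, the comparison cell built from the companion unit
  have eζ : D.Cell (D.hcomp (D.hid A) J) (D.vid A) (D.vid B) (D.hcomp fs K)
      = D.Cell J (D.vid A) (D.vid B) (D.hcomp fs K) := by rw [D.hid_hcomp]
  set ζ : D.Cell J (D.vid A) (D.vid B) (D.hcomp fs K) := cast eζ (D.hcompCell eta φ) with hζdef
  have hζ : HEq ζ (D.hcompCell eta φ) := by rw [hζdef]; exact cast_heq _ _
  -- θ : fs⊙K ⇒ K built from the companion counit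
  have eθ : D.Cell (D.hcomp fs K) f (D.vid B) (D.hcomp (D.hid C) K)
      = D.Cell (D.hcomp fs K) (D.vcomp (D.vid A) f) (D.vcomp (D.vid B) (D.vid B)) K := by
    rw [D.hid_hcomp K, D.vid_vcomp f, D.vid_vcomp (D.vid B)]
  set θ := cast eθ (D.hcompCell eps (D.cid K)) with hθdef
  have hθ : HEq θ (D.hcompCell eps (D.cid K)) := by rw [hθdef]; exact cast_heq _ _
  obtain ⟨ξ, hξ, hξu⟩ := hφ (D.hcomp fs K) (D.vid A) (D.vid B) θ
  -- (I) : ζ ; ξ = id_J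
  have eφt : D.Cell J f (D.vid B) K
      = D.Cell J (D.vcomp (D.vid A) f) (D.vcomp (D.vid B) (D.vid B)) K := by
    rw [D.vid_vcomp f, D.vid_vcomp (D.vid B)]
  set φt := cast eφt φ with hφtdef
  have hφt : HEq φt φ := by rw [hφtdef]; exact cast_heq _ _
  have hfac1 : φt = D.vcompCell (D.cid J) φ :=
    eq_of_heq (hφt.trans (D.cid_vcompCell φ).symm)
  have eι : D.Cell J (D.vcomp (D.vid A) (D.vid A)) (D.vcomp (D.vid B) (D.vid B)) J
      = D.Cell J (D.vid A) (D.vid B) J := by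
    rw [D.vid_vcomp (D.vid A), D.vid_vcomp (D.vid B)]
  set ι := cast eι (D.vcompCell ζ ξ) with hιdef
  have hι : HEq ι (D.vcompCell ζ ξ) := by rw [hιdef]; exact cast_heq _ _
  have hfac2 : φt = D.vcompCell ι φ := by
    have s1 : HEq (D.vcompCell ι φ) (D.vcompCell (D.vcompCell ζ ξ) φ) :=
      DoubleCat.vcompCell_congr_s13 rfl rfl rfl
        (D.vid_vcomp (D.vid A)).symm (D.vid_vcomp (D.vid B)).symm rfl rfl hι HEq.rfl
    have s2 : HEq (D.vcompCell (D.vcompCell ζ ξ) φ) (D.vcompCell ζ (D.vcompCell ξ φ)) :=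
      D.vcompCell_assoc ζ ξ φ
    have s3 : D.vcompCell ζ (D.vcompCell ξ φ) = D.vcompCell ζ θ := by rw [← hξ]
    have s4 : HEq (D.vcompCell ζ θ) (D.vcompCell (D.hcompCell eta φ) (D.hcompCell eps (D.cid K))) :=
      DoubleCat.vcompCell_congr_s13 (D.hid_hcomp J).symm rfl (D.hid_hcomp K).symm
        rfl rfl (D.vid_vcomp f) (D.vid_vcomp (D.vid B)) hζ hθ
    have s5 : D.vcompCell (D.hcompCell eta φ) (D.hcompCell eps (D.cid K))
        = D.hcompCell (D.vcompCell eta eps) (D.vcompCell φ (D.cid K)) :=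
      D.interchange eta φ eps (D.cid K)
    have s6 : HEq (D.hcompCell (D.vcompCell eta eps) (D.vcompCell φ (D.cid K)))
        (D.hcompCell (D.cidV f) φ) :=
      DoubleCat.hcompCell_congr_s13 rfl rfl rfl rfl
        (D.vid_vcomp f) (D.vcomp_vid f) (D.vid_vcomp (D.vid B)) hc1 (D.vcompCell_cid φ)
    have s7 : HEq (D.hcompCell (D.cidV f) φ) φ := D.cidV_hcompCell φ
    exact (eq_of_heq ((((s1.trans s2).trans (heq_of_eq s3)).trans s4).trans
      (((heq_of_eq s5).trans s6).trans (s7.trans hφt.symm)))).symm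
  have hIeq : ι = D.cid J := by
    obtain ⟨w, hw, hwu⟩ := hφ J (D.vid A) (D.vid B) φt
    exact (hwu ι hfac2).trans (hwu (D.cid J) hfac1).symm
  have hI : HEq (D.vcompCell ζ ξ) (D.cid J) := hι.symm.trans (heq_of_eq hIeq)
  -- transport ψ along fs⊙K
  have eψt : D.Cell (D.hcomp H J) s (D.vcomp (D.vid B) d) (D.hid M)
      = D.Cell (D.hcomp H J) s d (D.hid M) := by rw [D.vid_vcomp d]
  set ψt := cast eψt ψ with hψtdef
  have hψt : HEq ψt ψ := by rw [hψtdef]; exact cast_heq _ _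
  have eψh : D.Cell (D.hcomp H (D.hcomp fs K)) (D.vcomp (D.vid X) s) (D.vcomp (D.vid B) d) (D.hid M)
      = D.Cell (D.hcomp (D.hcomp H fs) K) s d (D.hid M) := by
    rw [D.hassoc H fs K, D.vid_vcomp s, D.vid_vcomp d]
  set ψh := cast eψh (D.vcompCell (D.hcompCell (D.cid H) ξ) ψt) with hψhdef
  have hψh : HEq ψh (D.vcompCell (D.hcompCell (D.cid H) ξ) ψt) := by
    rw [hψhdef]; exact cast_heq _ _
  obtain ⟨χ, hχ, hχu⟩ := hε (D.hcomp H fs) s ψh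
  -- the candidate factorization
  have eψ' : D.Cell (D.hcomp H (D.hid A)) (D.vcomp (D.vid X) s) (D.vcomp f r) (D.hid M)
      = D.Cell H s (D.vcomp f r) (D.hid M) := by rw [D.hcomp_hid H, D.vid_vcomp s]
  set ψ' := cast eψ' (D.vcompCell (D.hcompCell (D.cid H) eta) χ) with hψ'def
  have hψ' : HEq ψ' (D.vcompCell (D.hcompCell (D.cid H) eta) χ) := by
    rw [hψ'def]; exact cast_heq _ _
  refine ⟨ψ', ?_, ?_⟩
  · -- existence
    have t1 : HEq (D.hcompCell ψ' (D.vcompCell φ ε))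
        (D.hcompCell (D.vcompCell (D.hcompCell (D.cid H) eta) χ) (D.vcompCell φ ε)) :=
      DoubleCat.hcompCell_congr_s13 (D.hcomp_hid H).symm rfl rfl rfl
        (D.vid_vcomp s).symm rfl rfl hψ' HEq.rfl
    have t2 : D.hcompCell (D.vcompCell (D.hcompCell (D.cid H) eta) χ) (D.vcompCell φ ε)
        = D.vcompCell (D.hcompCell (D.hcompCell (D.cid H) eta) φ) (D.hcompCell χ ε) :=
      (D.interchange (D.hcompCell (D.cid H) eta) φ χ ε).symm
    have t3 : HEq (D.vcompCell (D.hcompCell (D.hcompCell (D.cid H) eta) φ) (D.hcompCell χ ε))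
        (D.vcompCell (D.hcompCell (D.cid H) (D.hcompCell eta φ))
          (D.vcompCell (D.hcompCell (D.cid H) ξ) ψt)) :=
      DoubleCat.vcompCell_congr_s13 (D.hassoc H (D.hid A) J) (D.hassoc H fs K)
        (D.hid_hcomp (D.hid M)) rfl rfl (D.vid_vcomp s).symm (D.vid_vcomp d).symm
        (D.hcompCell_assoc (D.cid H) eta φ) (hχ.symm.trans hψh)
    have t4 : HEq (D.vcompCell (D.hcompCell (D.cid H) (D.hcompCell eta φ))
          (D.vcompCell (D.hcompCell (D.cid H) ξ) ψt))
        (D.vcompCell (D.vcompCell (D.hcompCell (D.cid H) (D.hcompCell eta φ))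
          (D.hcompCell (D.cid H) ξ)) ψt) :=
      (D.vcompCell_assoc (D.hcompCell (D.cid H) (D.hcompCell eta φ))
        (D.hcompCell (D.cid H) ξ) ψt).symm
    have t5 : D.vcompCell (D.hcompCell (D.cid H) (D.hcompCell eta φ)) (D.hcompCell (D.cid H) ξ)
        = D.hcompCell (D.vcompCell (D.cid H) (D.cid H)) (D.vcompCell (D.hcompCell eta φ) ξ) :=
      D.interchange (D.cid H) (D.hcompCell eta φ) (D.cid H) ξ
    have sub2 : HEq (D.vcompCell (D.hcompCell eta φ) ξ) (D.cid J) :=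
      (DoubleCat.vcompCell_congr_s13 (D.hid_hcomp J) rfl rfl rfl rfl rfl rfl
        hζ.symm HEq.rfl).trans hI
    have t6 : HEq (D.hcompCell (D.vcompCell (D.cid H) (D.cid H))
          (D.vcompCell (D.hcompCell eta φ) ξ))
        (D.cid (D.hcomp H J)) :=
      (DoubleCat.hcompCell_congr_s13 rfl (D.hid_hcomp J) rfl rfl
        (D.vid_vcomp (D.vid X)) (D.vid_vcomp (D.vid A)) (D.vid_vcomp (D.vid B))
        (D.cid_vcompCell (D.cid H)) sub2).trans (heq_of_eq (D.cid_hcomp H J).symm)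
    have t7 : HEq (D.vcompCell (D.vcompCell (D.hcompCell (D.cid H) (D.hcompCell eta φ))
          (D.hcompCell (D.cid H) ξ)) ψt)
        (D.vcompCell (D.cid (D.hcomp H J)) ψt) :=
      DoubleCat.vcompCell_congr_s13 (by rw [D.hid_hcomp J]) rfl rfl
        (D.vid_vcomp (D.vid X)) (D.vid_vcomp (D.vid B)) rfl rfl
        ((heq_of_eq t5).trans t6) HEq.rfl
    have t8 : HEq (D.vcompCell (D.cid (D.hcomp H J)) ψt) ψt := D.cid_vcompCell ψt
    exact ((((((t1.trans (heq_of_eq t2)).trans t3).trans t4).trans t7).trans t8).trans hψt).symm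
  · -- uniqueness
    intro ψ'' h''
    -- build the corresponding cell over H⊙fs from ψ''
    have eτ : D.Cell fs (D.vcomp f r) (D.vcomp (D.vid C) r) (D.hid M)
        = D.Cell fs (D.vcomp f r) r (D.hid M) := by rw [D.vid_vcomp r]
    set τ := cast eτ (D.vcompCell eps (D.cidV r)) with hτdef
    have hτ : HEq τ (D.vcompCell eps (D.cidV r)) := by rw [hτdef]; exact cast_heq _ _
    have eχ2 : D.Cell (D.hcomp H fs) s r (D.hcomp (D.hid M) (D.hid M))
        = D.Cell (D.hcomp H fs) s r (D.hid M) := by rw [D.hid_hcomp]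
    set χ2 := cast eχ2 (D.hcompCell ψ'' τ) with hχ2def
    have hχ2 : HEq χ2 (D.hcompCell ψ'' τ) := by rw [hχ2def]; exact cast_heq _ _
    -- χ2 also factors ψh through ε
    have u1 : HEq ψh (D.vcompCell (D.hcompCell (D.cid H) ξ)
        (D.hcompCell ψ'' (D.vcompCell φ ε))) :=
      hψh.trans (DoubleCat.vcompCell_congr_s13 rfl rfl (D.hid_hcomp (D.hid M)).symm
        rfl rfl rfl (D.vid_vcomp d).symm HEq.rfl (hψt.trans h''))
    have u2 : D.vcompCell (D.hcompCell (D.cid H) ξ) (D.hcompCell ψ'' (D.vcompCell φ ε))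
        = D.hcompCell (D.vcompCell (D.cid H) ψ'') (D.vcompCell ξ (D.vcompCell φ ε)) :=
      D.interchange (D.cid H) ξ ψ'' (D.vcompCell φ ε)
    have v1 : HEq (D.hcompCell χ2 ε) (D.hcompCell (D.hcompCell ψ'' τ) ε) :=
      DoubleCat.hcompCell_congr_s13 rfl rfl (D.hid_hcomp (D.hid M)).symm rfl
        rfl rfl rfl hχ2 HEq.rfl
    have v2 : HEq (D.hcompCell (D.hcompCell ψ'' τ) ε) (D.hcompCell ψ'' (D.hcompCell τ ε)) :=
      D.hcompCell_assoc ψ'' τ ε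
    have v3a : HEq (D.hcompCell τ ε)
        (D.hcompCell (D.vcompCell eps (D.cidV r)) (D.vcompCell (D.cid K) ε)) :=
      DoubleCat.hcompCell_congr_s13 rfl rfl rfl rfl rfl (D.vid_vcomp r).symm
        (D.vid_vcomp d).symm hτ (D.cid_vcompCell ε).symm
    have v3b : D.hcompCell (D.vcompCell eps (D.cidV r)) (D.vcompCell (D.cid K) ε)
        = D.vcompCell (D.hcompCell eps (D.cid K)) (D.hcompCell (D.cidV r) ε) :=
      (D.interchange eps (D.cid K) (D.cidV r) ε).symm
    have v3c : HEq (D.vcompCell (D.hcompCell eps (D.cid K)) (D.hcompCell (D.cidV r) ε))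
        (D.vcompCell θ ε) :=
      DoubleCat.vcompCell_congr_s13 rfl (D.hid_hcomp K) (D.hid_hcomp (D.hid M))
        (D.vid_vcomp f).symm (D.vid_vcomp (D.vid B)).symm rfl rfl
        hθ.symm (D.cidV_hcompCell ε)
    have v4 : D.vcompCell θ ε = D.vcompCell (D.vcompCell ξ φ) ε := by rw [← hξ]
    have v5 : HEq (D.vcompCell (D.vcompCell ξ φ) ε) (D.vcompCell ξ (D.vcompCell φ ε)) :=
      D.vcompCell_assoc ξ φ ε
    have vβ : HEq (D.hcompCell τ ε) (D.vcompCell ξ (D.vcompCell φ ε)) :=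
      (((v3a.trans (heq_of_eq v3b)).trans v3c).trans (heq_of_eq v4)).trans v5
    have v6 : HEq (D.hcompCell ψ'' (D.hcompCell τ ε))
        (D.hcompCell (D.vcompCell (D.cid H) ψ'') (D.vcompCell ξ (D.vcompCell φ ε))) :=
      DoubleCat.hcompCell_congr_s13 rfl rfl rfl (by rw [D.hid_hcomp])
        (D.vid_vcomp s).symm (D.vid_vcomp (D.vcomp f r)).symm
        (by rw [D.vid_vcomp (D.vcomp (D.vid B) d), D.vid_vcomp d])
        (D.cid_vcompCell ψ'').symm vβ
    have hfacχ2 : HEq ψh (D.hcompCell χ2 ε) :=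
      (u1.trans (heq_of_eq u2)).trans (((v1.trans v2).trans v6).symm)
    have hχ2χ : χ2 = χ := hχu χ2 hfacχ2
    -- conclude ψ'' = ψ'
    have w1 : HEq ψ' (D.vcompCell (D.hcompCell (D.cid H) eta) (D.hcompCell ψ'' τ)) := by
      rw [hψ'def, ← hχ2χ]
      exact (cast_heq _ _).trans
        (DoubleCat.vcompCell_congr_s13 rfl rfl (D.hid_hcomp (D.hid M)).symm
          rfl rfl rfl rfl HEq.rfl hχ2)
    have w2 : D.vcompCell (D.hcompCell (D.cid H) eta) (D.hcompCell ψ'' τ)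
        = D.hcompCell (D.vcompCell (D.cid H) ψ'') (D.vcompCell eta τ) :=
      D.interchange (D.cid H) eta ψ'' τ
    have w3a : HEq (D.vcompCell eta τ) (D.vcompCell eta (D.vcompCell eps (D.cidV r))) :=
      DoubleCat.vcompCell_congr_s13 rfl rfl rfl rfl rfl rfl (D.vid_vcomp r).symm
        HEq.rfl hτ
    have w3b : HEq (D.vcompCell eta (D.vcompCell eps (D.cidV r)))
        (D.vcompCell (D.vcompCell eta eps) (D.cidV r)) :=
      (D.vcompCell_assoc eta eps (D.cidV r)).symm
    have w3c : HEq (D.vcompCell (D.vcompCell eta eps) (D.cidV r))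
        (D.vcompCell (D.cidV f) (D.cidV r)) :=
      DoubleCat.vcompCell_congr_s13 rfl rfl rfl (D.vid_vcomp f) (D.vcomp_vid f) rfl rfl
        hc1 HEq.rfl
    have w3 : HEq (D.vcompCell eta τ) (D.cidV (D.vcomp f r)) :=
      ((w3a.trans w3b).trans w3c).trans (heq_of_eq (D.cidV_vcomp f r).symm)
    have w4 : HEq (D.hcompCell (D.vcompCell (D.cid H) ψ'') (D.vcompCell eta τ))
        (D.hcompCell ψ'' (D.cidV (D.vcomp f r))) :=
      DoubleCat.hcompCell_congr_s13 rfl rfl rfl rfl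
        (D.vid_vcomp s) (D.vid_vcomp (D.vcomp f r)) rfl
        (D.cid_vcompCell ψ'') w3
    have w5 : HEq (D.hcompCell ψ'' (D.cidV (D.vcomp f r))) ψ'' := D.hcompCell_cidV ψ''
    exact (eq_of_heq (((w1.trans (heq_of_eq w2)).trans w4).trans w5)).symm
end
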